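/- arXiv:2306.13898 — 3 statements merged into one kernel-verified Lean document; each statement's English description precedes it below -/
import Mathlib

section
/- Let X be a two-sided subshift over a finite alphabet, let φ : X → ℝ and h : X → ℝ be continuous with h(x) < 0 for all x ∈ X. Then the two pressures coincide: P̃_X(σ,φ) = P_X(σ,φ). -/
open scoped ENNReal

/-- The shift map on the two-sided full shift over the alphabet `Fin l`. -/
def shiftMap (l : ℕ) : (ℤ → Fin l) → (ℤ → Fin l) := fun w j => w (j + 1)

/-- The Birkhoff sum `S_n φ (x) = ∑_{j=0}^{n-1} φ (σ^j x)`. -/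
noncomputable def birkSum (l : ℕ) (φ : (ℤ → Fin l) → ℝ) (n : ℕ) (x : ℤ → Fin l) : ℝ :=
  ∑ j ∈ Finset.range n, φ ((shiftMap l)^[j] x)

/-- The cylinder `[I]` of a finite word `I = i₀ i₁ ⋯ i_{n-1}`. -/
def cylinder (l : ℕ) (I : List (Fin l)) : Set (ℤ → Fin l) :=
  {w | ∀ (j : ℕ) (hj : j < I.length), w (j : ℤ) = I.get ⟨j, hj⟩}

/-- `X*` : the finite words allowed in `X`. -/
def words (l : ℕ) (X : Set (ℤ → Fin l)) : Set (List (Fin l)) :=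
  {I | I ≠ [] ∧ (cylinder l I ∩ X).Nonempty}

/-- `sup_{x ∈ [I] ∩ X} exp (S_{|I|} φ (x))`. -/
noncomputable def supExp (l : ℕ) (X : Set (ℤ → Fin l)) (φ : (ℤ → Fin l) → ℝ)
    (I : List (Fin l)) : ℝ :=
  sSup ((fun x => Real.exp (birkSum l φ I.length x)) '' (cylinder l I ∩ X))

/-- `r₀ = sup_{x ∈ X} exp (h x)`. -/
noncomputable def rZero (l : ℕ) (X : Set (ℤ → Fin l)) (h : (ℤ → Fin l) → ℝ) : ℝ :=
  sSup ((fun x => Real.exp (h x)) '' X)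

/-- The family of words `A_r`.  (For a word of length `1` the second condition reads `r ≤ 1`,
since the `dropLast` of a one-letter word is the empty word, whose cylinder is everything and
whose Birkhoff sum is `0`.) -/
noncomputable def wordsAt (l : ℕ) (X : Set (ℤ → Fin l)) (h : (ℤ → Fin l) → ℝ) (r : ℝ) :
    Set (List (Fin l)) :=
  {I | I ∈ words l X ∧ supExp l X h I < r ∧ r ≤ supExp l X h I.dropLast}

/-- The weight `exp (-λ |I|) · sup_{x ∈ [I] ∩ X} exp (S_{|I|} φ (x))` of a word, in `ℝ≥0∞`. -/
noncomputable def wt (l : ℕ) (X : Set (ℤ → Fin l)) (φ : (ℤ → Fin l) → ℝ)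
    (lam : ℝ) (I : List (Fin l)) : ℝ≥0∞ :=
  ENNReal.ofReal (Real.exp (-lam * (I.length : ℝ)) * supExp l X φ I)

/-- `m_P(Z, λ, φ, n)` : infimum over countable covers of `Z` by cylinders of allowed words of
length at least `n`. -/
noncomputable def mPaux (l : ℕ) (X : Set (ℤ → Fin l)) (φ : (ℤ → Fin l) → ℝ)
    (Z : Set (ℤ → Fin l)) (lam : ℝ) (n : ℕ) : ℝ≥0∞ :=
  ⨅ (T : Set (List (Fin l))) (_ : T.Countable)
    (_ : ∀ I ∈ T, I ∈ words l X ∧ n ≤ I.length)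
    (_ : Z ⊆ ⋃ I ∈ T, cylinder l I),
    ∑' I : T, wt l X φ lam I.1

/-- `m_P(Z, λ, φ) = lim_{n → ∞} m_P(Z, λ, φ, n)` (a monotone limit, hence a supremum). -/
noncomputable def mP (l : ℕ) (X : Set (ℤ → Fin l)) (φ : (ℤ → Fin l) → ℝ)
    (Z : Set (ℤ → Fin l)) (lam : ℝ) : ℝ≥0∞ :=
  ⨆ n : ℕ, mPaux l X φ Z lam n

/-- The topological pressure `P_Z(σ, φ)` of `φ` on `Z`. -/
noncomputable def press (l : ℕ) (X : Set (ℤ → Fin l)) (φ : (ℤ → Fin l) → ℝ)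
    (Z : Set (ℤ → Fin l)) : ℝ :=
  sInf {lam : ℝ | mP l X φ Z lam = 0}

/-- `m̃_P(Z, λ, φ, r)` : infimum over countable covers of `Z` by cylinders of words belonging to
`A_{r'}` for some `0 < r' ≤ r`. -/
noncomputable def mtPaux (l : ℕ) (X : Set (ℤ → Fin l)) (h φ : (ℤ → Fin l) → ℝ)
    (Z : Set (ℤ → Fin l)) (lam : ℝ) (r : ℝ) : ℝ≥0∞ :=
  ⨅ (T : Set (List (Fin l))) (_ : T.Countable)
    (_ : ∀ I ∈ T, ∃ r' : ℝ, 0 < r' ∧ r' ≤ r ∧ I ∈ wordsAt l X h r')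
    (_ : Z ⊆ ⋃ I ∈ T, cylinder l I),
    ∑' I : T, wt l X φ lam I.1

/-- `m̃_P(Z, λ, φ) = lim_{r → 0} m̃_P(Z, λ, φ, r)` (a monotone limit, hence a supremum). -/
noncomputable def mtP (l : ℕ) (X : Set (ℤ → Fin l)) (h φ : (ℤ → Fin l) → ℝ)
    (Z : Set (ℤ → Fin l)) (lam : ℝ) : ℝ≥0∞ :=
  ⨆ (r : ℝ) (_ : 0 < r), mtPaux l X h φ Z lam r

/-- The pressure `P̃_Z(σ, φ)`. -/
noncomputable def presst (l : ℕ) (X : Set (ℤ → Fin l)) (h φ : (ℤ → Fin l) → ℝ)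
    (Z : Set (ℤ → Fin l)) : ℝ :=
  sInf {lam : ℝ | mtP l X h φ Z lam = 0}


section PressureAux

variable {l : ℕ} {X : Set (ℤ → Fin l)}

private lemma shift_mem_aux (hXinv : shiftMap l '' X = X) {x : ℤ → Fin l} (hx : x ∈ X)
    (j : ℕ) : (shiftMap l)^[j] x ∈ X := by
  induction j with
  | zero => simpa using hx
  | succ j ih =>
      rw [Function.iterate_succ_apply']
      rw [← hXinv]
      exact ⟨_, ih, rfl⟩

private lemma birkSum_le_aux (hXinv : shiftMap l '' X = X) {g : (ℤ → Fin l) → ℝ} {c : ℝ}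
    (hg : ∀ y ∈ X, g y ≤ c) {x : ℤ → Fin l} (hx : x ∈ X) (n : ℕ) :
    birkSum l g n x ≤ n * c := by
  unfold birkSum
  calc ∑ j ∈ Finset.range n, g ((shiftMap l)^[j] x)
      ≤ ∑ _j ∈ Finset.range n, c :=
        Finset.sum_le_sum fun j _ => hg _ (shift_mem_aux hXinv hx j)
    _ = n * c := by simp [mul_comm]

private lemma birkSum_ge_aux (hXinv : shiftMap l '' X = X) {g : (ℤ → Fin l) → ℝ} {c : ℝ}
    (hg : ∀ y ∈ X, c ≤ g y) {x : ℤ → Fin l} (hx : x ∈ X) (n : ℕ) :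
    (n : ℝ) * c ≤ birkSum l g n x := by
  unfold birkSum
  calc ((n : ℝ)) * c = ∑ _j ∈ Finset.range n, c := by simp [mul_comm]
    _ ≤ ∑ j ∈ Finset.range n, g ((shiftMap l)^[j] x) :=
        Finset.sum_le_sum fun j _ => hg _ (shift_mem_aux hXinv hx j)

private lemma bddAbove_supExp_aux (hXinv : shiftMap l '' X = X) {g : (ℤ → Fin l) → ℝ} {c : ℝ}
    (hg : ∀ y ∈ X, g y ≤ c) (I : List (Fin l)) :
    BddAbove ((fun x => Real.exp (birkSum l g I.length x)) '' (cylinder l I ∩ X)) := by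
  refine ⟨Real.exp (I.length * c), ?_⟩
  rintro y ⟨x, hx, rfl⟩
  exact Real.exp_le_exp.mpr (birkSum_le_aux hXinv hg hx.2 I.length)

private lemma supExp_le_aux (hXinv : shiftMap l '' X = X) {g : (ℤ → Fin l) → ℝ} {c : ℝ}
    (hg : ∀ y ∈ X, g y ≤ c) (I : List (Fin l)) :
    supExp l X g I ≤ Real.exp (I.length * c) := by
  refine Real.sSup_le ?_ (Real.exp_nonneg _)
  rintro y ⟨x, hx, rfl⟩
  exact Real.exp_le_exp.mpr (birkSum_le_aux hXinv hg hx.2 I.length)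

private lemma cylinder_subset_dropLast_aux (I : List (Fin l)) :
    cylinder l I ⊆ cylinder l I.dropLast := by
  intro w hw j hj
  have hj' : j < I.length := lt_of_lt_of_le hj (by
    rw [List.length_dropLast]; exact Nat.sub_le _ _)
  have := hw j hj'
  simp only [List.get_eq_getElem] at this ⊢
  rw [List.getElem_dropLast]
  exact this

/-- Key lemma: for an allowed word `I`, `sup exp(S h)` strictly decreases compared to the
dropLast word, and the latter is positive. -/
private lemma supExp_lt_dropLast_aux (hXinv : shiftMap l '' X = X) {g : (ℤ → Fin l) → ℝ}
    {a : ℝ} (ha : 0 < a) (hg : ∀ y ∈ X, g y ≤ -a) {I : List (Fin l)} (hI : I ∈ words l X) :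
    0 < supExp l X g I.dropLast ∧ supExp l X g I < supExp l X g I.dropLast := by
  obtain ⟨hne, x, hx⟩ := hI
  set m := I.dropLast.length with hmdef
  have hm : I.length = m + 1 := by
    have : 0 < I.length := List.length_pos_iff.mpr hne
    rw [hmdef, List.length_dropLast]
    omega
  have hxd : x ∈ cylinder l I.dropLast ∩ X :=
    ⟨cylinder_subset_dropLast_aux I hx.1, hx.2⟩
  have hbddD := bddAbove_supExp_aux hXinv hg I.dropLast
  have hDpos : 0 < supExp l X g I.dropLast :=
    lt_of_lt_of_le (Real.exp_pos _) (le_csSup hbddD ⟨x, hxd, rfl⟩)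
  refine ⟨hDpos, ?_⟩
  have key : supExp l X g I ≤ Real.exp (-a) * supExp l X g I.dropLast := by
    refine Real.sSup_le ?_ (by positivity)
    rintro y ⟨z, hz, rfl⟩
    have hz2 : z ∈ cylinder l I.dropLast ∩ X :=
      ⟨cylinder_subset_dropLast_aux I hz.1, hz.2⟩
    have hsplit : birkSum l g I.length z = birkSum l g m z + g ((shiftMap l)^[m] z) := by
      rw [hm]
      exact Finset.sum_range_succ _ m
    show Real.exp (birkSum l g I.length z) ≤ Real.exp (-a) * supExp l X g I.dropLast
    rw [hsplit, Real.exp_add]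
    have h1 : Real.exp (g ((shiftMap l)^[m] z)) ≤ Real.exp (-a) :=
      Real.exp_le_exp.mpr (hg _ (shift_mem_aux hXinv hz.2 m))
    have h2 : Real.exp (birkSum l g m z) ≤ supExp l X g I.dropLast :=
      le_csSup hbddD ⟨z, hz2, rfl⟩
    calc Real.exp (birkSum l g m z) * Real.exp (g ((shiftMap l)^[m] z))
        ≤ supExp l X g I.dropLast * Real.exp (-a) :=
          mul_le_mul h2 h1 (Real.exp_nonneg _) hDpos.le
      _ = Real.exp (-a) * supExp l X g I.dropLast := mul_comm _ _
  calc supExp l X g I ≤ Real.exp (-a) * supExp l X g I.dropLast := key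
    _ < 1 * supExp l X g I.dropLast :=
        mul_lt_mul_of_pos_right (Real.exp_lt_one_iff.mpr (by linarith)) hDpos
    _ = supExp l X g I.dropLast := one_mul _

private lemma mtP_eq_mP_aux (hXinv : shiftMap l '' X = X)
    {φ g : (ℤ → Fin l) → ℝ} {a b : ℝ} (ha : 0 < a) (hb : 0 < b)
    (hga : ∀ y ∈ X, g y ≤ -a) (hgb : ∀ y ∈ X, -b ≤ g y) (lam : ℝ) :
    mtP l X g φ X lam = mP l X φ X lam := by
  apply le_antisymm
  · -- mtP ≤ mP : for each r > 0, choose n large so exp(-a n) < r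
    rw [mtP]
    refine iSup_le fun r => iSup_le fun hr => ?_
    obtain ⟨n, hn⟩ := exists_nat_gt ((-Real.log r) / a)
    have hexp : Real.exp ((n : ℝ) * (-a)) < r := by
      have h1 : -Real.log r < (n : ℝ) * a := (div_lt_iff₀ ha).mp hn
      calc Real.exp ((n : ℝ) * (-a)) < Real.exp (Real.log r) :=
            Real.exp_lt_exp.mpr (by nlinarith)
        _ = r := Real.exp_log hr
    rw [mP]
    refine le_trans ?_ (le_iSup _ n)
    rw [mtPaux, mPaux]
    refine le_iInf fun T => le_iInf fun hTc => le_iInf fun hTa => le_iInf fun hcov => ?_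
    refine iInf_le_of_le T <| iInf_le_of_le hTc <| iInf_le_of_le ?_ <|
      iInf_le_of_le hcov le_rfl
    intro I hIT
    obtain ⟨hIw, hIlen⟩ := hTa I hIT
    obtain ⟨hDpos, hlt⟩ := supExp_lt_dropLast_aux hXinv ha hga hIw
    have hIr : supExp l X g I < r := by
      have h1 : supExp l X g I ≤ Real.exp ((I.length : ℝ) * (-a)) :=
        supExp_le_aux hXinv hga I
      have h2 : ((I.length : ℝ)) * (-a) ≤ (n : ℝ) * (-a) := by
        have : (n : ℝ) ≤ I.length := by exact_mod_cast hIlen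
        nlinarith
      exact lt_of_le_of_lt (h1.trans (Real.exp_le_exp.mpr h2)) hexp
    refine ⟨min r (supExp l X g I.dropLast), ?_, min_le_left _ _, hIw, ?_, min_le_right _ _⟩
    · exact lt_min hr hDpos
    · exact lt_min hIr hlt
  · -- mP ≤ mtP : for each n, choose r = exp(-(n+1) b)
    rw [mP]
    refine iSup_le fun n => ?_
    set r : ℝ := Real.exp ((n : ℝ) * (-b)) with hrdef
    have hrpos : 0 < r := Real.exp_pos _
    rw [mtP]
    refine le_trans ?_ (le_iSup_of_le r (le_iSup_of_le hrpos le_rfl))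
    rw [mtPaux, mPaux]
    refine le_iInf fun T => le_iInf fun hTc => le_iInf fun hTa => le_iInf fun hcov => ?_
    refine iInf_le_of_le T <| iInf_le_of_le hTc <| iInf_le_of_le ?_ <|
      iInf_le_of_le hcov le_rfl
    intro I hIT
    obtain ⟨r', hr'pos, hr'le, hIw, hIlt, _⟩ := hTa I hIT
    refine ⟨hIw, ?_⟩
    -- lower bound: exp(|I| * (-b)) ≤ supExp g I < r' ≤ r = exp(n * (-b))
    obtain ⟨hne, x, hx⟩ := hIw
    have hlow : Real.exp ((I.length : ℝ) * (-b)) ≤ supExp l X g I := by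
      have hmem : Real.exp (birkSum l g I.length x) ∈
          (fun x => Real.exp (birkSum l g I.length x)) '' (cylinder l I ∩ X) := ⟨x, hx, rfl⟩
      refine le_trans (Real.exp_le_exp.mpr ?_) (le_csSup (bddAbove_supExp_aux hXinv hga I) hmem)
      exact birkSum_ge_aux hXinv hgb hx.2 I.length
    have hlt2 : Real.exp ((I.length : ℝ) * (-b)) < Real.exp ((n : ℝ) * (-b)) := by
      rw [← hrdef]
      exact lt_of_le_of_lt hlow (lt_of_lt_of_le hIlt hr'le)
    have hcast : (n : ℝ) < (I.length : ℝ) := by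
      have h3 := Real.exp_lt_exp.mp hlt2
      nlinarith
    exact le_of_lt (by exact_mod_cast hcast)

end PressureAux

/-- For a two-sided subshift `X` and continuous `φ, h : X → ℝ` with `h < 0`
on `X`, the two pressures coincide: `P̃_X(σ,φ) = P_X(σ,φ)`. -/
theorem pressure_tilde_eq_pressure (l : ℕ) (hl : 1 ≤ l) (X : Set (ℤ → Fin l))
    (hXne : X.Nonempty) (hXcpt : IsCompact X) (hXinv : shiftMap l '' X = X)
    (φ h : (ℤ → Fin l) → ℝ) (hφ : ContinuousOn φ X) (hh : ContinuousOn h X)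
    (hneg : ∀ x ∈ X, h x < 0) :
    presst l X h φ X = press l X φ X := by
  obtain ⟨x₀, hx₀, hmax⟩ := hXcpt.exists_isMaxOn hXne hh
  obtain ⟨x₁, hx₁, hmin⟩ := hXcpt.exists_isMinOn hXne hh
  set a := -h x₀ with hadef
  set b := -h x₁ with hbdef
  have ha : 0 < a := neg_pos.mpr (hneg x₀ hx₀)
  have hha : ∀ y ∈ X, h y ≤ -a := fun y hy => by
    have := hmax hy
    simp only [hadef, neg_neg]
    exact this
  have hhb : ∀ y ∈ X, -b ≤ h y := fun y hy => by
    have := hmin hy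
    simp only [hbdef, neg_neg]
    exact this
  have hb : 0 < b := by
    have h1 := hhb x₀ hx₀
    have h2 := hneg x₀ hx₀
    linarith
  have key : ∀ lam, mtP l X h φ X lam = mP l X φ X lam :=
    fun lam => mtP_eq_mP_aux hXinv ha hb hha hhb lam
  unfold presst press
  congr 1
  ext lam
  simp only [Set.mem_setOf_eq, key lam]
end

section
/- Let X be a two-sided subshift over a finite alphabet, let g : X → ℝ and h : X → ℝ be continuous with h(x) < 0 for all x ∈ X, and let t ∈ ℝ satisfy P_X(σ, g+th) = 0. Then lim_{r→0} (log Γ_r)/(log r) = 0, where Γ_r = Σ_{I∈A_r} sup_{x∈[I]∩X} exp(S_{|I|}(g+th)(x)). -/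
open scoped ENNReal

namespace S3

variable {l : ℕ}

lemma shift_iter_apply (m : ℕ) (x : ℤ → Fin l) (j : ℤ) :
    (shiftMap l)^[m] x j = x (j + m) := by
  induction m generalizing x j with
  | zero => simp
  | succ k ih =>
      rw [Function.iterate_succ_apply, ih, shiftMap]
      push_cast
      ring_nf

lemma mem_cylinder_append {I J : List (Fin l)} {x : ℤ → Fin l} :
    x ∈ cylinder l (I ++ J) ↔ x ∈ cylinder l I ∧ (shiftMap l)^[I.length] x ∈ cylinder l J := by
  constructor
  · intro hx
    refine ⟨fun j hj => ?_, fun j hj => ?_⟩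
    · have h1 : j < (I ++ J).length := by simp; omega
      have := hx j h1
      rw [this]
      simp only [List.get_eq_getElem]
      exact List.getElem_append_left hj
    · have h1 : I.length + j < (I ++ J).length := by simp; omega
      have := hx (I.length + j) h1
      rw [shift_iter_apply]
      have e : (j : ℤ) + (I.length : ℤ) = ((I.length + j : ℕ) : ℤ) := by push_cast; ring
      rw [e, this]
      simp only [List.get_eq_getElem]
      rw [List.getElem_append_right (by omega)]
      congr 1
      omega
  · rintro ⟨h1, h2⟩
    intro j hj
    rcases lt_or_ge j I.length with hc | hc
    · rw [h1 j hc]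
      simp only [List.get_eq_getElem]
      exact (List.getElem_append_left hc).symm
    · have hj' : j - I.length < J.length := by simp at hj; omega
      have := h2 (j - I.length) hj'
      rw [shift_iter_apply] at this
      have e : ((j - I.length : ℕ) : ℤ) + (I.length : ℤ) = (j : ℤ) := by
        have : I.length ≤ j := hc
        push_cast [Nat.cast_sub hc]
        ring
      rw [e] at this
      rw [this]
      simp only [List.get_eq_getElem]
      rw [List.getElem_append_right (by omega)]

lemma birkSum_add (φ : (ℤ → Fin l) → ℝ) (m n : ℕ) (x : ℤ → Fin l) :
    birkSum l φ (m + n) x = birkSum l φ m x + birkSum l φ n ((shiftMap l)^[m] x) := by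
  unfold birkSum
  rw [Finset.sum_range_add]
  congr 1
  refine Finset.sum_congr rfl fun j _ => ?_
  rw [← Function.iterate_add_apply, Nat.add_comm j m]

end S3

namespace S3

variable {l : ℕ} {X : Set (ℤ → Fin l)} {φ : (ℤ → Fin l) → ℝ} {M : ℝ}

lemma shift_mem (hXinv : shiftMap l '' X = X) {x : ℤ → Fin l} (hx : x ∈ X) :
    shiftMap l x ∈ X := hXinv ▸ Set.mem_image_of_mem _ hx

lemma shift_iter_mem (hXinv : shiftMap l '' X = X) (m : ℕ) {x : ℤ → Fin l} (hx : x ∈ X) :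
    (shiftMap l)^[m] x ∈ X := by
  induction m with
  | zero => exact hx
  | succ k ih => rw [Function.iterate_succ_apply']; exact shift_mem hXinv ih

lemma abs_birkSum_le (hXinv : shiftMap l '' X = X) (hM : ∀ x ∈ X, |φ x| ≤ M)
    {x : ℤ → Fin l} (hx : x ∈ X) (n : ℕ) : |birkSum l φ n x| ≤ n * M := by
  calc |birkSum l φ n x| ≤ ∑ j ∈ Finset.range n, |φ ((shiftMap l)^[j] x)| :=
        Finset.abs_sum_le_sum_abs _ _
    _ ≤ ∑ _j ∈ Finset.range n, M :=
        Finset.sum_le_sum fun j _ => hM _ (shift_iter_mem hXinv j hx)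
    _ = n * M := by simp [mul_comm]

lemma supExp_nonneg (I : List (Fin l)) : 0 ≤ supExp l X φ I :=
  Real.sSup_nonneg (by rintro y ⟨x, hx, rfl⟩; positivity)

lemma supExp_le (hXinv : shiftMap l '' X = X) (hM : ∀ x ∈ X, |φ x| ≤ M) (I : List (Fin l)) :
    supExp l X φ I ≤ Real.exp (I.length * M) := by
  refine Real.sSup_le ?_ (Real.exp_pos _).le
  rintro y ⟨x, hx, rfl⟩
  exact Real.exp_le_exp.2 <| (abs_le.1 (abs_birkSum_le hXinv hM hx.2 I.length)).2

lemma bddAbove_supExp (hXinv : shiftMap l '' X = X) (hM : ∀ x ∈ X, |φ x| ≤ M)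
    (I : List (Fin l)) :
    BddAbove ((fun x => Real.exp (birkSum l φ I.length x)) '' (cylinder l I ∩ X)) := by
  refine ⟨Real.exp (I.length * M), ?_⟩
  rintro y ⟨x, hx, rfl⟩
  exact Real.exp_le_exp.2 <| (abs_le.1 (abs_birkSum_le hXinv hM hx.2 I.length)).2

lemma le_supExp (hXinv : shiftMap l '' X = X) (hM : ∀ x ∈ X, |φ x| ≤ M)
    {I : List (Fin l)} {x : ℤ → Fin l} (hx : x ∈ cylinder l I ∩ X) :
    Real.exp (birkSum l φ I.length x) ≤ supExp l X φ I :=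
  le_csSup (bddAbove_supExp hXinv hM I) (Set.mem_image_of_mem _ hx)

lemma supExp_pos (hXinv : shiftMap l '' X = X) (hM : ∀ x ∈ X, |φ x| ≤ M)
    {I : List (Fin l)} (hI : (cylinder l I ∩ X).Nonempty) : 0 < supExp l X φ I := by
  obtain ⟨x, hx⟩ := hI
  exact lt_of_lt_of_le (Real.exp_pos _) (le_supExp hXinv hM hx)

lemma exp_neg_le_supExp (hXinv : shiftMap l '' X = X) (hM : ∀ x ∈ X, |φ x| ≤ M)
    {I : List (Fin l)} (hI : (cylinder l I ∩ X).Nonempty) :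
    Real.exp (-(I.length * M)) ≤ supExp l X φ I := by
  obtain ⟨x, hx⟩ := hI
  refine le_trans ?_ (le_supExp hXinv hM hx)
  exact Real.exp_le_exp.2 <| (abs_le.1 (abs_birkSum_le hXinv hM hx.2 I.length)).1

lemma supExp_append_le (hXinv : shiftMap l '' X = X) (hM : ∀ x ∈ X, |φ x| ≤ M)
    (I J : List (Fin l)) :
    supExp l X φ (I ++ J) ≤ supExp l X φ I * supExp l X φ J := by
  refine Real.sSup_le ?_ (mul_nonneg (supExp_nonneg I) (supExp_nonneg J))
  rintro y ⟨x, hx, rfl⟩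
  have hxa : x ∈ cylinder l (I ++ J) := hx.1
  rw [mem_cylinder_append] at hxa
  have hlen : (I ++ J).length = I.length + J.length := by simp
  simp only []
  rw [hlen, birkSum_add, Real.exp_add]
  have h1 : x ∈ cylinder l I ∩ X := ⟨hxa.1, hx.2⟩
  have h2 : (shiftMap l)^[I.length] x ∈ cylinder l J ∩ X :=
    ⟨hxa.2, shift_iter_mem hXinv I.length hx.2⟩
  exact mul_le_mul (le_supExp hXinv hM h1) (le_supExp hXinv hM h2)
    (Real.exp_pos _).le (supExp_nonneg I)

end S3

namespace S3

variable {l : ℕ} {X : Set (ℤ → Fin l)} {φ : (ℤ → Fin l) → ℝ} {M : ℝ}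

lemma wordsLen_finite (l : ℕ) (X : Set (ℤ → Fin l)) (n : ℕ) :
    {I : List (Fin l) | I.length = n ∧ I ∈ words l X}.Finite :=
  (List.finite_length_eq (Fin l) n).subset fun _ hI => hI.1

/-- The finset of allowed words of length `n`. -/
noncomputable def wordsLen (l : ℕ) (X : Set (ℤ → Fin l)) (n : ℕ) : Finset (List (Fin l)) :=
  (wordsLen_finite l X n).toFinset

lemma mem_wordsLen {n : ℕ} {I : List (Fin l)} :
    I ∈ wordsLen l X n ↔ I.length = n ∧ I ∈ words l X := Set.Finite.mem_toFinset _

/-- The partition sum `Λ_n`. -/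
noncomputable def Lam (l : ℕ) (X : Set (ℤ → Fin l)) (φ : (ℤ → Fin l) → ℝ) (n : ℕ) : ℝ :=
  ∑ I ∈ wordsLen l X n, supExp l X φ I

/-- The word `x₀ x₁ ⋯ x_{n-1}`. -/
def wordOf (x : ℤ → Fin l) (n : ℕ) : List (Fin l) := List.ofFn fun i : Fin n => x (i : ℕ)

@[simp] lemma length_wordOf (x : ℤ → Fin l) (n : ℕ) : (wordOf x n).length = n := by
  simp [wordOf]

lemma mem_cylinder_wordOf (x : ℤ → Fin l) (n : ℕ) : x ∈ cylinder l (wordOf x n) := by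
  intro j hj
  simp only [wordOf, List.get_ofFn]
  simp

lemma wordOf_mem_words {x : ℤ → Fin l} (hx : x ∈ X) {n : ℕ} (hn : 1 ≤ n) :
    wordOf x n ∈ words l X := by
  refine ⟨?_, x, mem_cylinder_wordOf x n, hx⟩
  intro h
  have := length_wordOf x n
  rw [h] at this
  simp at this
  omega

lemma take_wordOf (x : ℤ → Fin l) {m n : ℕ} (hmn : m ≤ n) :
    (wordOf x n).take m = wordOf x m := by
  apply List.ext_get
  · simp [hmn]
  · intro i h1 h2
    simp only [List.get_eq_getElem, List.getElem_take]
    simp only [wordOf, List.getElem_ofFn]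

lemma wordOf_mem_wordsLen {x : ℤ → Fin l} (hx : x ∈ X) {n : ℕ} (hn : 1 ≤ n) :
    wordOf x n ∈ wordsLen l X n := mem_wordsLen.2 ⟨length_wordOf x n, wordOf_mem_words hx hn⟩

lemma Lam_nonneg (n : ℕ) : 0 ≤ Lam l X φ n :=
  Finset.sum_nonneg fun I _ => supExp_nonneg I

lemma le_Lam (hXinv : shiftMap l '' X = X) (hM : ∀ x ∈ X, |φ x| ≤ M) {n : ℕ} {I : List (Fin l)}
    (hI : I ∈ wordsLen l X n) : supExp l X φ I ≤ Lam l X φ n :=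
  Finset.single_le_sum (fun J _ => supExp_nonneg J) hI

lemma Lam_pos (hXinv : shiftMap l '' X = X) (hM : ∀ x ∈ X, |φ x| ≤ M) (hXne : X.Nonempty)
    {n : ℕ} (hn : 1 ≤ n) : 0 < Lam l X φ n := by
  obtain ⟨x, hx⟩ := hXne
  calc (0:ℝ) < supExp l X φ (wordOf x n) :=
        supExp_pos hXinv hM ⟨x, mem_cylinder_wordOf x n, hx⟩
    _ ≤ Lam l X φ n := le_Lam hXinv hM (wordOf_mem_wordsLen hx hn)

lemma exp_neg_le_Lam (hXinv : shiftMap l '' X = X) (hM : ∀ x ∈ X, |φ x| ≤ M) (hXne : X.Nonempty)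
    {n : ℕ} (hn : 1 ≤ n) : Real.exp (-(n * M)) ≤ Lam l X φ n := by
  obtain ⟨x, hx⟩ := hXne
  calc Real.exp (-(n*M)) = Real.exp (-((wordOf x n).length * M)) := by rw [length_wordOf]
    _ ≤ supExp l X φ (wordOf x n) :=
        exp_neg_le_supExp hXinv hM ⟨x, mem_cylinder_wordOf x n, hx⟩
    _ ≤ Lam l X φ n := le_Lam hXinv hM (wordOf_mem_wordsLen hx hn)

lemma Lam_submul (hXinv : shiftMap l '' X = X) (hM : ∀ x ∈ X, |φ x| ≤ M) {m n : ℕ}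
    (hm : 1 ≤ m) (hn : 1 ≤ n) : Lam l X φ (m + n) ≤ Lam l X φ m * Lam l X φ n := by
  classical
  have hmem : ∀ K ∈ wordsLen l X (m + n),
      K.take m ∈ wordsLen l X m ∧ K.drop m ∈ wordsLen l X n := by
    intro K hK
    rw [mem_wordsLen] at hK
    obtain ⟨hlen, hKne, x, hxc, hxX⟩ := hK
    have hxc' : x ∈ cylinder l (K.take m ++ K.drop m) := by
      rw [List.take_append_drop]; exact hxc
    rw [mem_cylinder_append] at hxc'
    constructor
    · refine mem_wordsLen.2 ⟨by rw [List.length_take, hlen]; omega, ?_, x, hxc'.1, hxX⟩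
      intro habs
      have : (K.take m).length = 0 := by rw [habs]; simp
      rw [List.length_take, hlen] at this
      omega
    · refine mem_wordsLen.2 ⟨by simp [hlen], ?_, _, hxc'.2,
        shift_iter_mem hXinv _ hxX⟩
      intro habs
      have : (K.drop m).length = 0 := by rw [habs]; simp
      rw [List.length_drop, hlen] at this
      omega
  have hlen' : ∀ K ∈ wordsLen l X (m + n), (K.take m).length = m := by
    intro K hK
    rw [mem_wordsLen] at hK
    simp [hK.1]
  have step1 : Lam l X φ (m+n) ≤
      ∑ K ∈ wordsLen l X (m+n), supExp l X φ (K.take m) * supExp l X φ (K.drop m) := by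
    refine Finset.sum_le_sum fun K hK => ?_
    calc supExp l X φ K = supExp l X φ (K.take m ++ K.drop m) := by
          rw [List.take_append_drop]
      _ ≤ _ := supExp_append_le hXinv hM _ _
  have hinj : ∀ K ∈ wordsLen l X (m+n), ∀ K' ∈ wordsLen l X (m+n),
      (fun K : List (Fin l) => (K.take m, K.drop m)) K
        = (fun K : List (Fin l) => (K.take m, K.drop m)) K' → K = K' := by
    intro K hK K' hK' hEq
    simp only [Prod.mk.injEq] at hEq
    rw [← List.take_append_drop m K, ← List.take_append_drop m K', hEq.1, hEq.2]
  have step2 : ∑ K ∈ wordsLen l X (m+n), supExp l X φ (K.take m) * supExp l X φ (K.drop m)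
      ≤ ∑ p ∈ wordsLen l X m ×ˢ wordsLen l X n, supExp l X φ p.1 * supExp l X φ p.2 := by
    have heq : ∑ p ∈ (wordsLen l X (m+n)).image (fun K => (K.take m, K.drop m)),
        supExp l X φ p.1 * supExp l X φ p.2
        = ∑ K ∈ wordsLen l X (m+n), supExp l X φ (K.take m) * supExp l X φ (K.drop m) :=
      Finset.sum_image hinj
    rw [← heq]
    refine Finset.sum_le_sum_of_subset_of_nonneg ?_ ?_
    · intro p hp
      rw [Finset.mem_image] at hp
      obtain ⟨K, hK, rfl⟩ := hp
      exact Finset.mem_product.2 (hmem K hK)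
    · intro p _ _
      exact mul_nonneg (supExp_nonneg _) (supExp_nonneg _)
  have step3 : ∑ p ∈ wordsLen l X m ×ˢ wordsLen l X n,
      supExp l X φ p.1 * supExp l X φ p.2 = Lam l X φ m * Lam l X φ n := by
    rw [Finset.sum_product]
    rw [Lam, Lam, Finset.sum_mul]
    refine Finset.sum_congr rfl fun A _ => ?_
    rw [Finset.mul_sum]
  linarith

end S3

namespace S3

variable {l : ℕ} {X : Set (ℤ → Fin l)} {φ : (ℤ → Fin l) → ℝ} {M : ℝ}

lemma words_length_pos {I : List (Fin l)} (hI : I ∈ words l X) : 1 ≤ I.length := by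
  rcases I with _ | ⟨a, I⟩
  · exact absurd rfl hI.1
  · simp

lemma take_eq_of_mem_cylinders {I K : List (Fin l)} {x : ℤ → Fin l}
    (hxI : x ∈ cylinder l I) (hxK : x ∈ cylinder l K) (hlen : I.length ≤ K.length) :
    K.take I.length = I := by
  apply List.ext_get
  · simp [hlen]
  · intro i h1 h2
    simp only [List.get_eq_getElem, List.getElem_take]
    have hiK : i < K.length := by simp at h1; omega
    have hiI : i < I.length := h2
    have e1 := hxI i hiI
    have e2 := hxK i hiK
    simp only [List.get_eq_getElem] at e1 e2
    rw [← e2, e1]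

lemma Lam_rec (hXinv : shiftMap l '' X = X) (hM : ∀ x ∈ X, |φ x| ≤ M)
    (T : Finset (List (Fin l))) (hTw : ∀ J ∈ T, J ∈ words l X)
    (hcov : X ⊆ ⋃ J ∈ T, cylinder l J) {N m : ℕ} (hN : ∀ J ∈ T, J.length ≤ N) (hm : N < m) :
    Lam l X φ m ≤ ∑ J ∈ T, supExp l X φ J * Lam l X φ (m - J.length) := by
  classical
  -- choice of a covering word for each K
  have hch : ∀ K : List (Fin l), ∃ J : List (Fin l), K ∈ wordsLen l X m →
      J ∈ T ∧ K.take J.length = J := by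
    intro K
    by_cases hK : K ∈ wordsLen l X m
    · obtain ⟨hlen, hKne, x, hxc, hxX⟩ := mem_wordsLen.1 hK
      obtain ⟨J, hJT, hxJ⟩ := Set.mem_iUnion₂.1 (hcov hxX)
      refine ⟨J, fun _ => ⟨hJT, take_eq_of_mem_cylinders hxJ hxc ?_⟩⟩
      rw [hlen]
      exact le_of_lt (lt_of_le_of_lt (hN J hJT) hm)
    · exact ⟨[], fun h => absurd h hK⟩
  choose g hg using hch
  have hgm : ∀ K ∈ wordsLen l X m, g K ∈ T := fun K hK => (hg K hK).1
  have hsplit : ∀ K ∈ wordsLen l X m, K = g K ++ K.drop (g K).length := by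
    intro K hK
    conv_lhs => rw [← List.take_append_drop (g K).length K]
    rw [(hg K hK).2]
  -- pointwise bound
  have hpt : ∀ K ∈ wordsLen l X m,
      supExp l X φ K ≤ supExp l X φ (g K) * supExp l X φ (K.drop (g K).length) := by
    intro K hK
    calc supExp l X φ K = supExp l X φ (g K ++ K.drop (g K).length) := by
          conv_lhs => rw [hsplit K hK]
      _ ≤ _ := supExp_append_le hXinv hM _ _
  have step1 : Lam l X φ m ≤
      ∑ K ∈ wordsLen l X m, supExp l X φ (g K) * supExp l X φ (K.drop (g K).length) :=
    Finset.sum_le_sum hpt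
  -- fiberwise regrouping
  have step2 : ∑ K ∈ wordsLen l X m, supExp l X φ (g K) * supExp l X φ (K.drop (g K).length)
      = ∑ J ∈ T, ∑ K ∈ (wordsLen l X m).filter (fun K => g K = J),
          supExp l X φ (g K) * supExp l X φ (K.drop (g K).length) :=
    (Finset.sum_fiberwise_of_maps_to hgm _).symm
  -- inner bound
  have step3 : ∀ J ∈ T, ∑ K ∈ (wordsLen l X m).filter (fun K => g K = J),
      supExp l X φ (g K) * supExp l X φ (K.drop (g K).length)
      ≤ supExp l X φ J * Lam l X φ (m - J.length) := by
    intro J hJ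
    have hJlen : 1 ≤ J.length := words_length_pos (hTw J hJ)
    have hJN : J.length ≤ N := hN J hJ
    have hcongr : ∑ K ∈ (wordsLen l X m).filter (fun K => g K = J),
        supExp l X φ (g K) * supExp l X φ (K.drop (g K).length)
        = ∑ K ∈ (wordsLen l X m).filter (fun K => g K = J),
          supExp l X φ J * supExp l X φ (K.drop J.length) := by
      refine Finset.sum_congr rfl fun K hK => ?_
      rw [Finset.mem_filter] at hK
      rw [hK.2]
    rw [hcongr]
    rw [← Finset.mul_sum]
    refine mul_le_mul_of_nonneg_left ?_ (supExp_nonneg J)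
    -- sum of drops bounded by Lam (m - |J|)
    have hinj : ∀ K ∈ (wordsLen l X m).filter (fun K => g K = J),
        ∀ K' ∈ (wordsLen l X m).filter (fun K => g K = J),
        (fun K : List (Fin l) => K.drop J.length) K
          = (fun K : List (Fin l) => K.drop J.length) K' → K = K' := by
      intro K hK K' hK' hEq
      rw [Finset.mem_filter] at hK hK'
      have e1 := hsplit K hK.1
      have e2 := hsplit K' hK'.1
      rw [hK.2] at e1
      rw [hK'.2] at e2
      simp only at hEq
      rw [e1, e2, hEq]
    have heq : ∑ p ∈ ((wordsLen l X m).filter (fun K => g K = J)).image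
          (fun K : List (Fin l) => K.drop J.length), supExp l X φ p
        = ∑ K ∈ (wordsLen l X m).filter (fun K => g K = J),
          supExp l X φ (K.drop J.length) := Finset.sum_image hinj
    rw [← heq]
    refine Finset.sum_le_sum_of_subset_of_nonneg ?_ fun p _ _ => supExp_nonneg p
    intro p hp
    rw [Finset.mem_image] at hp
    obtain ⟨K, hK, rfl⟩ := hp
    rw [Finset.mem_filter] at hK
    obtain ⟨hKm, hgK⟩ := hK
    obtain ⟨hlen, hKne, x, hxc, hxX⟩ := mem_wordsLen.1 hKm
    have hxc' : x ∈ cylinder l (J ++ K.drop J.length) := by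
      rw [← hgK]
      rw [← hsplit K hKm]
      exact hxc
    rw [mem_cylinder_append] at hxc'
    refine mem_wordsLen.2 ⟨by rw [List.length_drop, hlen], ?_, _, hxc'.2,
      shift_iter_mem hXinv _ hxX⟩
    intro habs
    have : (K.drop J.length).length = 0 := by rw [habs]; simp
    rw [List.length_drop, hlen] at this
    omega
  calc Lam l X φ m ≤ _ := step1
    _ = _ := step2
    _ ≤ ∑ J ∈ T, supExp l X φ J * Lam l X φ (m - J.length) := Finset.sum_le_sum step3

end S3

namespace S3

variable {l : ℕ} {X : Set (ℤ → Fin l)} {φ : (ℤ → Fin l) → ℝ} {M : ℝ}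

lemma key_exp_bound (hXinv : shiftMap l '' X = X) (hM : ∀ x ∈ X, |φ x| ≤ M)
    (T : Finset (List (Fin l))) (hTw : ∀ J ∈ T, J ∈ words l X)
    (hcov : X ⊆ ⋃ J ∈ T, cylinder l J) {N : ℕ} (hN1 : 1 ≤ N)
    (hN : ∀ J ∈ T, J.length ≤ N) (lam : ℝ)
    (hs : ∑ J ∈ T, Real.exp (-lam * J.length) * supExp l X φ J ≤ 1) :
    ∃ D : ℝ, 0 < D ∧ ∀ m, 1 ≤ m → Lam l X φ m ≤ D * Real.exp (lam * m) := by
  classical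
  set D : ℝ := max 1 (((Finset.Icc 1 N).image (fun k => Lam l X φ k * Real.exp (-lam * k))).max'
    (by simp; omega)) with hD
  have hDpos : 0 < D := lt_of_lt_of_le one_pos (le_max_left _ _)
  refine ⟨D, hDpos, ?_⟩
  intro m
  induction m using Nat.strong_induction_on with
  | _ m ih =>
    intro hm1
    rcases le_or_gt m N with hmN | hmN
    · -- base case
      have hmem : Lam l X φ m * Real.exp (-lam * m) ∈
          (Finset.Icc 1 N).image (fun k => Lam l X φ k * Real.exp (-lam * k)) :=
        Finset.mem_image_of_mem _ (Finset.mem_Icc.2 ⟨hm1, hmN⟩)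
      have hle : Lam l X φ m * Real.exp (-lam * m) ≤ D :=
        le_trans (Finset.le_max' _ _ hmem) (le_max_right _ _)
      calc Lam l X φ m = Lam l X φ m * Real.exp (-lam * m) * Real.exp (lam * m) := by
            rw [mul_assoc, ← Real.exp_add]; ring_nf; simp
        _ ≤ D * Real.exp (lam * m) :=
            mul_le_mul_of_nonneg_right hle (Real.exp_pos _).le
    · -- inductive step
      have hrec := Lam_rec hXinv hM T hTw hcov hN hmN
      have hstep : ∀ J ∈ T, supExp l X φ J * Lam l X φ (m - J.length)
          ≤ Real.exp (-lam * J.length) * supExp l X φ J * (D * Real.exp (lam * m)) := by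
        intro J hJ
        have hJ1 : 1 ≤ J.length := words_length_pos (hTw J hJ)
        have hJm : J.length < m := lt_of_le_of_lt (hN J hJ) hmN
        have hIH : Lam l X φ (m - J.length) ≤ D * Real.exp (lam * (m - J.length : ℕ)) :=
          ih (m - J.length) (by omega) (by omega)
        have hcast : ((m - J.length : ℕ) : ℝ) = (m : ℝ) - J.length := by
          rw [Nat.cast_sub (le_of_lt hJm)]
        calc supExp l X φ J * Lam l X φ (m - J.length)
            ≤ supExp l X φ J * (D * Real.exp (lam * (m - J.length : ℕ))) :=
              mul_le_mul_of_nonneg_left hIH (supExp_nonneg J)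
          _ = Real.exp (-lam * J.length) * supExp l X φ J * (D * Real.exp (lam * m)) := by
              rw [hcast]
              rw [show lam * ((m:ℝ) - J.length) = (-lam * J.length) + lam * m by ring]
              rw [Real.exp_add]
              ring
      calc Lam l X φ m ≤ ∑ J ∈ T, supExp l X φ J * Lam l X φ (m - J.length) := hrec
        _ ≤ ∑ J ∈ T, Real.exp (-lam * J.length) * supExp l X φ J * (D * Real.exp (lam * m)) :=
            Finset.sum_le_sum hstep
        _ = (∑ J ∈ T, Real.exp (-lam * J.length) * supExp l X φ J) * (D * Real.exp (lam * m)) := by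
            rw [← Finset.sum_mul]
        _ ≤ 1 * (D * Real.exp (lam * m)) :=
            mul_le_mul_of_nonneg_right hs (by positivity)
        _ = D * Real.exp (lam * m) := one_mul _

end S3

namespace S3

variable {l : ℕ} {X : Set (ℤ → Fin l)} {φ : (ℤ → Fin l) → ℝ} {M : ℝ}

/-- The Fekete infimum `P* = inf_n (log Λ_n)/n`. -/
noncomputable def Pstar (l : ℕ) (X : Set (ℤ → Fin l)) (φ : (ℤ → Fin l) → ℝ) : ℝ :=
  sInf ((fun n : ℕ => Real.log (Lam l X φ n) / n) '' {n | 1 ≤ n})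

lemma neg_le_div (hXinv : shiftMap l '' X = X) (hM : ∀ x ∈ X, |φ x| ≤ M) (hXne : X.Nonempty)
    {n : ℕ} (hn : 1 ≤ n) : -M ≤ Real.log (Lam l X φ n) / n := by
  have h1 : Real.exp (-(n * M)) ≤ Lam l X φ n := exp_neg_le_Lam hXinv hM hXne hn
  have h2 : -(n * M) ≤ Real.log (Lam l X φ n) := by
    rw [← Real.log_exp (-(n*M))]
    exact Real.log_le_log (Real.exp_pos _) h1
  rw [le_div_iff₀ (by exact_mod_cast hn : (0:ℝ) < (n:ℝ))]
  nlinarith [h2]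

lemma bddBelow_logLam (hXinv : shiftMap l '' X = X) (hM : ∀ x ∈ X, |φ x| ≤ M)
    (hXne : X.Nonempty) :
    BddBelow ((fun n : ℕ => Real.log (Lam l X φ n) / n) '' {n | 1 ≤ n}) := by
  refine ⟨-M, ?_⟩
  rintro y ⟨n, hn, rfl⟩
  exact neg_le_div hXinv hM hXne hn

lemma Pstar_le (hXinv : shiftMap l '' X = X) (hM : ∀ x ∈ X, |φ x| ≤ M) (hXne : X.Nonempty)
    {n : ℕ} (hn : 1 ≤ n) : Pstar l X φ ≤ Real.log (Lam l X φ n) / n :=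
  csInf_le (bddBelow_logLam hXinv hM hXne) ⟨n, hn, rfl⟩

/-- submultiplicativity bootstrap: one good block forces exponential growth rate. -/
lemma Lam_exp_of_le (hXinv : shiftMap l '' X = X) (hM : ∀ x ∈ X, |φ x| ≤ M)
    {n0 : ℕ} (hn0 : 1 ≤ n0) {q : ℝ} (hq : Lam l X φ n0 ≤ Real.exp (q * n0)) :
    ∃ E : ℝ, 0 < E ∧ ∀ n, 1 ≤ n → Lam l X φ n ≤ E * Real.exp (q * n) := by
  classical
  set E : ℝ := max 1 (((Finset.Icc 1 n0).image (fun k => Lam l X φ k * Real.exp (-q * k))).max'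
    (by simp; omega)) with hE
  have hEpos : 0 < E := lt_of_lt_of_le one_pos (le_max_left _ _)
  refine ⟨E, hEpos, ?_⟩
  intro n
  induction n using Nat.strong_induction_on with
  | _ n ih =>
    intro hn1
    rcases le_or_gt n n0 with hnn | hnn
    · have hmem : Lam l X φ n * Real.exp (-q * n) ∈
          (Finset.Icc 1 n0).image (fun k => Lam l X φ k * Real.exp (-q * k)) :=
        Finset.mem_image_of_mem _ (Finset.mem_Icc.2 ⟨hn1, hnn⟩)
      have hle : Lam l X φ n * Real.exp (-q * n) ≤ E :=
        le_trans (Finset.le_max' _ _ hmem) (le_max_right _ _)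
      calc Lam l X φ n = Lam l X φ n * Real.exp (-q * n) * Real.exp (q * n) := by
            rw [mul_assoc, ← Real.exp_add]; ring_nf; rw [Real.exp_zero, mul_one]
        _ ≤ E * Real.exp (q * n) := mul_le_mul_of_nonneg_right hle (Real.exp_pos _).le
    · have hsub : Lam l X φ n ≤ Lam l X φ n0 * Lam l X φ (n - n0) := by
        have := Lam_submul hXinv hM hn0 (by omega : 1 ≤ n - n0)
        rwa [show n0 + (n - n0) = n by omega] at this
      have hIH : Lam l X φ (n - n0) ≤ E * Real.exp (q * ((n - n0 : ℕ) : ℝ)) :=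
        ih (n - n0) (by omega) (by omega)
      have hcast : ((n - n0 : ℕ) : ℝ) = (n : ℝ) - n0 := by
        rw [Nat.cast_sub (le_of_lt hnn)]
      calc Lam l X φ n ≤ Lam l X φ n0 * Lam l X φ (n - n0) := hsub
        _ ≤ Real.exp (q * n0) * (E * Real.exp (q * ((n - n0 : ℕ) : ℝ))) := by
            refine mul_le_mul hq hIH (Lam_nonneg _) (Real.exp_pos _).le
        _ = E * Real.exp (q * n) := by
            rw [hcast, show q * ((n:ℝ) - n0) = q * n - q * n0 by ring, Real.exp_sub]
            have hpos := Real.exp_pos (q * (n0:ℝ))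
            field_simp
  
lemma Pstar_le_of_exp_bound (hXinv : shiftMap l '' X = X) (hM : ∀ x ∈ X, |φ x| ≤ M)
    (hXne : X.Nonempty) {D lam : ℝ} (hD : 0 < D)
    (hb : ∀ m, 1 ≤ m → Lam l X φ m ≤ D * Real.exp (lam * m)) :
    Pstar l X φ ≤ lam := by
  have hseq : ∀ m : ℕ, 1 ≤ m → Pstar l X φ ≤ lam + Real.log D / m := by
    intro m hm
    have hmpos : (0:ℝ) < m := by exact_mod_cast hm
    refine le_trans (Pstar_le hXinv hM hXne hm) ?_
    have hlog : Real.log (Lam l X φ m) ≤ Real.log D + lam * m := by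
      calc Real.log (Lam l X φ m) ≤ Real.log (D * Real.exp (lam * m)) :=
            Real.log_le_log (Lam_pos hXinv hM hXne hm) (hb m hm)
        _ = Real.log D + lam * m := by rw [Real.log_mul (ne_of_gt hD) (Real.exp_ne_zero _),
              Real.log_exp]
    calc Real.log (Lam l X φ m) / m ≤ (Real.log D + lam * m) / m :=
          (div_le_div_iff_of_pos_right hmpos).2 hlog
      _ = lam + Real.log D / m := by
          rw [add_div, mul_div_assoc, div_self (ne_of_gt hmpos), mul_one, add_comm]
  have htend : Filter.Tendsto (fun m : ℕ => lam + Real.log D / m) Filter.atTop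
      (nhds (lam + 0)) :=
    Filter.Tendsto.const_add _ (tendsto_const_div_atTop_nhds_zero_nat _)
  rw [add_zero] at htend
  refine ge_of_tendsto htend ?_
  filter_upwards [Filter.eventually_ge_atTop 1] with m hm using hseq m hm

/-- Fekete-type upper bound. -/
lemma fekete_upper (hXinv : shiftMap l '' X = X) (hM : ∀ x ∈ X, |φ x| ≤ M) (hXne : X.Nonempty)
    {δ : ℝ} (hδ : 0 < δ) :
    ∃ n1 : ℕ, 1 ≤ n1 ∧ ∀ n, n1 ≤ n → Lam l X φ n ≤ Real.exp ((Pstar l X φ + δ) * n) := by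
  have hnon : ((fun n : ℕ => Real.log (Lam l X φ n) / n) '' {n | 1 ≤ n}).Nonempty :=
    ⟨_, 1, by simp, rfl⟩
  have hlt : Pstar l X φ < Pstar l X φ + δ / 2 := by linarith
  obtain ⟨y, ⟨n0, hn0, rfl⟩, hy⟩ := exists_lt_of_csInf_lt hnon hlt
  set q := Pstar l X φ + δ / 2 with hqdef
  have hn0pos : (0:ℝ) < n0 := by exact_mod_cast hn0
  have hq : Lam l X φ n0 ≤ Real.exp (q * n0) := by
    have h1 : Real.log (Lam l X φ n0) ≤ q * n0 := by
      rw [div_lt_iff₀ hn0pos] at hy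
      linarith
    calc Lam l X φ n0 = Real.exp (Real.log (Lam l X φ n0)) :=
          (Real.exp_log (Lam_pos hXinv hM hXne hn0)).symm
      _ ≤ Real.exp (q * n0) := Real.exp_le_exp.2 h1
  obtain ⟨E, hEpos, hEb⟩ := Lam_exp_of_le hXinv hM hn0 hq
  obtain ⟨n1, hn1⟩ := Filter.eventually_atTop.1
    ((tendsto_natCast_atTop_atTop (R := ℝ)).eventually_ge_atTop (2 * Real.log E / δ))
  refine ⟨max 1 n1, le_max_left _ _, fun n hn => ?_⟩
  have hn1' : 1 ≤ n := le_trans (le_max_left _ _) hn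
  have hnn1 : n1 ≤ n := le_trans (le_max_right _ _) hn
  have hE2 : 2 * Real.log E / δ ≤ n := hn1 n hnn1
  have hnpos : (0:ℝ) < n := by exact_mod_cast hn1'
  calc Lam l X φ n ≤ E * Real.exp (q * n) := hEb n hn1'
    _ = Real.exp (Real.log E + q * n) := by rw [Real.exp_add, Real.exp_log hEpos]
    _ ≤ Real.exp ((Pstar l X φ + δ) * n) := by
        refine Real.exp_le_exp.2 ?_
        rw [hqdef]
        rw [div_le_iff₀ hδ] at hE2
        nlinarith [hE2]

end S3

namespace S3

variable {l : ℕ} {X : Set (ℤ → Fin l)} {φ : (ℤ → Fin l) → ℝ} {M : ℝ}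

lemma isOpen_cylinder (I : List (Fin l)) : IsOpen (cylinder l I) := by
  have : cylinder l I = ⋂ i : Fin I.length, {w : ℤ → Fin l | w ((i : ℕ) : ℤ) = I.get i} := by
    ext w
    constructor
    · intro hw
      refine Set.mem_iInter.2 fun i => hw i i.2
    · intro hw j hj
      exact Set.mem_iInter.1 hw ⟨j, hj⟩
  rw [this]
  refine isOpen_iInter_of_finite fun i => ?_
  have : {w : ℤ → Fin l | w ((i : ℕ) : ℤ) = I.get i}
      = (fun w : ℤ → Fin l => w ((i : ℕ) : ℤ)) ⁻¹' {I.get i} := rfl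
  rw [this]
  exact (continuous_apply _).isOpen_preimage _ (isOpen_discrete _)

lemma wt_eq (lam : ℝ) (I : List (Fin l)) :
    wt l X φ lam I = ENNReal.ofReal (Real.exp (-lam * (I.length : ℝ)) * supExp l X φ I) := rfl

lemma mPaux_le_cover (lam : ℝ) (n : ℕ) (T : Finset (List (Fin l)))
    (hTw : ∀ I ∈ T, I ∈ words l X ∧ n ≤ I.length)
    (hcov : X ⊆ ⋃ I ∈ (T : Set (List (Fin l))), cylinder l I) :
    mPaux l X φ X lam n ≤ ∑ I ∈ T, wt l X φ lam I := by
  have hc : (T : Set (List (Fin l))).Countable := T.countable_toSet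
  calc mPaux l X φ X lam n
      ≤ ∑' I : (T : Set (List (Fin l))), wt l X φ lam I.1 :=
        iInf_le_of_le (T : Set (List (Fin l))) (iInf_le_of_le hc
          (iInf_le_of_le (fun I hI => hTw I hI) (iInf_le_of_le hcov (le_refl _))))
    _ = ∑ I ∈ T, wt l X φ lam I := by
        exact T.tsum_subtype (wt l X φ lam)

lemma mP_eq_zero_of_gt (hXinv : shiftMap l '' X = X) (hM : ∀ x ∈ X, |φ x| ≤ M)
    (hXne : X.Nonempty) {lam : ℝ} (hlam : Pstar l X φ < lam) :
    mP l X φ X lam = 0 := by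
  -- pick a good block
  have hnon : ((fun n : ℕ => Real.log (Lam l X φ n) / n) '' {n | 1 ≤ n}).Nonempty :=
    ⟨_, 1, by simp, rfl⟩
  obtain ⟨y, ⟨n0, hn0, rfl⟩, hy⟩ := exists_lt_of_csInf_lt hnon hlam
  set q := Real.log (Lam l X φ n0) / n0 with hqdef
  have hn0pos : (0:ℝ) < n0 := by exact_mod_cast hn0
  have hq : Lam l X φ n0 ≤ Real.exp (q * n0) := by
    rw [hqdef, div_mul_cancel₀ _ (ne_of_gt hn0pos), Real.exp_log (Lam_pos hXinv hM hXne hn0)]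
  obtain ⟨E, hEpos, hEb⟩ := Lam_exp_of_le hXinv hM hn0 hq
  rw [mP, ENNReal.iSup_eq_zero]
  intro n
  -- covers by words of length k
  have hcover : ∀ k : ℕ, 1 ≤ k → n ≤ k →
      mPaux l X φ X lam n ≤ ENNReal.ofReal (E * Real.exp ((q - lam) * k)) := by
    intro k hk1 hkn
    have hTw : ∀ I ∈ wordsLen l X k, I ∈ words l X ∧ n ≤ I.length := by
      intro I hI
      obtain ⟨hlen, hw⟩ := mem_wordsLen.1 hI
      exact ⟨hw, by omega⟩
    have hcov : X ⊆ ⋃ I ∈ ((wordsLen l X k : Finset (List (Fin l))) :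
        Set (List (Fin l))), cylinder l I := by
      intro x hx
      exact Set.mem_biUnion (by exact_mod_cast wordOf_mem_wordsLen hx hk1)
        (mem_cylinder_wordOf x k)
    refine le_trans (mPaux_le_cover lam n (wordsLen l X k) hTw hcov) ?_
    have hsum : ∑ I ∈ wordsLen l X k, wt l X φ lam I
        = ENNReal.ofReal (∑ I ∈ wordsLen l X k,
            Real.exp (-lam * (I.length : ℝ)) * supExp l X φ I) := by
      rw [ENNReal.ofReal_sum_of_nonneg (fun I _ =>
        mul_nonneg (Real.exp_pos _).le (supExp_nonneg I))]
      rfl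
    rw [hsum]
    refine ENNReal.ofReal_le_ofReal ?_
    have : ∑ I ∈ wordsLen l X k, Real.exp (-lam * (I.length : ℝ)) * supExp l X φ I
        = Real.exp (-lam * k) * Lam l X φ k := by
      rw [Lam, Finset.mul_sum]
      refine Finset.sum_congr rfl fun I hI => ?_
      rw [(mem_wordsLen.1 hI).1]
    rw [this]
    calc Real.exp (-lam * k) * Lam l X φ k
        ≤ Real.exp (-lam * k) * (E * Real.exp (q * k)) :=
          mul_le_mul_of_nonneg_left (hEb k hk1) (Real.exp_pos _).le
      _ = E * Real.exp ((q - lam) * k) := by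
          rw [show (q - lam) * (k:ℝ) = -lam * k + q * k by ring, Real.exp_add]
          ring
  -- limit
  have hqlam : q - lam < 0 := by
    have : q < lam := hy
    linarith
  have htend : Filter.Tendsto (fun k : ℕ => ENNReal.ofReal (E * Real.exp ((q - lam) * k)))
      Filter.atTop (nhds 0) := by
    have h1 : Filter.Tendsto (fun k : ℕ => (q - lam) * k) Filter.atTop Filter.atBot := by
      exact Filter.Tendsto.const_mul_atTop_of_neg hqlam (tendsto_natCast_atTop_atTop (R := ℝ))
    have h2 : Filter.Tendsto (fun k : ℕ => E * Real.exp ((q - lam) * k)) Filter.atTop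
        (nhds (E * 0)) :=
      (Real.tendsto_exp_atBot.comp h1).const_mul E
    rw [mul_zero] at h2
    have := ENNReal.tendsto_ofReal h2
    rwa [ENNReal.ofReal_zero] at this
  have hfinal : mPaux l X φ X lam n ≤ 0 := by
    refine ge_of_tendsto htend ?_
    filter_upwards [Filter.eventually_ge_atTop (max 1 n)] with k hk
    exact hcover k (le_trans (le_max_left _ _) hk) (le_trans (le_max_right _ _) hk)
  exact le_antisymm hfinal (zero_le)

end S3

namespace S3

variable {l : ℕ} {X : Set (ℤ → Fin l)} {φ : (ℤ → Fin l) → ℝ} {M : ℝ}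

lemma one_le_cover_sum (hXinv : shiftMap l '' X = X) (hM : ∀ x ∈ X, |φ x| ≤ M)
    (hXne : X.Nonempty) {lam : ℝ} (hlam : lam < Pstar l X φ)
    (T₀ : Finset (List (Fin l))) (hTw : ∀ J ∈ T₀, J ∈ words l X)
    (hcov : X ⊆ ⋃ J ∈ T₀, cylinder l J) :
    1 ≤ ∑ J ∈ T₀, Real.exp (-lam * (J.length : ℝ)) * supExp l X φ J := by
  by_contra hs
  push_neg at hs
  set N : ℕ := max 1 (T₀.sup (fun J => J.length)) with hN
  have hN1 : 1 ≤ N := le_max_left _ _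
  have hNb : ∀ J ∈ T₀, J.length ≤ N :=
    fun J hJ => le_trans (Finset.le_sup hJ) (le_max_right _ _)
  obtain ⟨D, hD, hb⟩ := key_exp_bound hXinv hM T₀ hTw hcov hN1 hNb lam (le_of_lt hs)
  exact absurd (Pstar_le_of_exp_bound hXinv hM hXne hD hb) (not_le.2 hlam)

lemma one_le_mPaux (hXcpt : IsCompact X) (hXinv : shiftMap l '' X = X)
    (hM : ∀ x ∈ X, |φ x| ≤ M) (hXne : X.Nonempty) {lam : ℝ} (hlam : lam < Pstar l X φ)
    (n : ℕ) : 1 ≤ mPaux l X φ X lam n := by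
  rw [mPaux]
  refine le_iInf fun T => le_iInf fun hTc => le_iInf fun hTw => le_iInf fun hcov => ?_
  -- finite subcover
  obtain ⟨t, ht⟩ := hXcpt.elim_finite_subcover (fun I : T => cylinder l I.1)
    (fun I => isOpen_cylinder I.1) (by
      intro x hx
      obtain ⟨I, hIT, hxI⟩ := Set.mem_iUnion₂.1 (hcov hx)
      exact Set.mem_iUnion.2 ⟨⟨I, hIT⟩, hxI⟩)
  classical
  set T₀ : Finset (List (Fin l)) := t.image Subtype.val with hT₀
  have hT₀w : ∀ J ∈ T₀, J ∈ words l X := by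
    intro J hJ
    obtain ⟨i, _, rfl⟩ := Finset.mem_image.1 hJ
    exact (hTw i.1 i.2).1
  have hT₀cov : X ⊆ ⋃ J ∈ T₀, cylinder l J := by
    intro x hx
    obtain ⟨i, hit, hxi⟩ := Set.mem_iUnion₂.1 (ht hx)
    exact Set.mem_biUnion (Finset.mem_image_of_mem _ hit) hxi
  have hkey := one_le_cover_sum hXinv hM hXne hlam T₀ hT₀w hT₀cov
  calc (1 : ℝ≥0∞) = ENNReal.ofReal 1 := by simp
    _ ≤ ENNReal.ofReal (∑ J ∈ T₀, Real.exp (-lam * (J.length : ℝ)) * supExp l X φ J) :=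
        ENNReal.ofReal_le_ofReal hkey
    _ = ∑ J ∈ T₀, wt l X φ lam J := by
        rw [ENNReal.ofReal_sum_of_nonneg (fun I _ =>
          mul_nonneg (Real.exp_pos _).le (supExp_nonneg I))]
        rfl
    _ = ∑ i ∈ t, wt l X φ lam i.1 := by
        rw [hT₀]
        exact (Finset.sum_image (fun i _ j _ hij => Subtype.ext hij))
    _ ≤ ∑' I : T, wt l X φ lam I.1 := ENNReal.sum_le_tsum t

lemma press_eq_Pstar (hXcpt : IsCompact X) (hXinv : shiftMap l '' X = X)
    (hM : ∀ x ∈ X, |φ x| ≤ M) (hXne : X.Nonempty) :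
    press l X φ X = Pstar l X φ := by
  have hsub1 : ∀ lam : ℝ, Pstar l X φ < lam → lam ∈ {lam : ℝ | mP l X φ X lam = 0} :=
    fun lam hlam => mP_eq_zero_of_gt hXinv hM hXne hlam
  have hsub2 : ∀ lam ∈ {lam : ℝ | mP l X φ X lam = 0}, Pstar l X φ ≤ lam := by
    intro lam hlam
    by_contra hlt
    push_neg at hlt
    have h1 : (1 : ℝ≥0∞) ≤ mP l X φ X lam :=
      le_trans (one_le_mPaux hXcpt hXinv hM hXne hlt 0) (le_iSup _ 0)
    rw [Set.mem_setOf_eq] at hlam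
    rw [hlam] at h1
    simp at h1
  refine le_antisymm ?_ ?_
  · refine le_of_forall_pos_le_add fun ε hε => ?_
    exact le_trans (csInf_le ⟨Pstar l X φ, fun b hb => hsub2 b hb⟩
      (hsub1 _ (by linarith))) (le_refl _)
  · exact le_csInf ⟨Pstar l X φ + 1, hsub1 _ (by linarith)⟩ hsub2

end S3

namespace S3

variable {l : ℕ} {X : Set (ℤ → Fin l)} {φ hf : (ℤ → Fin l) → ℝ} {M a b : ℝ}

lemma cylinder_nil : cylinder l ([] : List (Fin l)) = Set.univ := by
  ext w
  constructor
  · intro _; trivial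
  · intro _ j hj
    simp at hj

lemma supExp_nil (hXne : X.Nonempty) : supExp l X hf ([] : List (Fin l)) = 1 := by
  rw [supExp]
  have h1 : cylinder l ([] : List (Fin l)) ∩ X = X := by rw [cylinder_nil, Set.univ_inter]
  rw [h1]
  have h2 : (fun x => Real.exp (birkSum l hf ([] : List (Fin l)).length x)) '' X = {1} := by
    have : ∀ x : ℤ → Fin l, Real.exp (birkSum l hf ([] : List (Fin l)).length x) = 1 := by
      intro x
      simp [birkSum]
    rw [show (fun x => Real.exp (birkSum l hf ([] : List (Fin l)).length x))
      = fun _ => (1:ℝ) from funext this]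
    exact Set.Nonempty.image_const hXne 1
  rw [h2, csSup_singleton]

lemma birkSum_le_of_le (hXinv : shiftMap l '' X = X) (hha : ∀ x ∈ X, hf x ≤ -a)
    {x : ℤ → Fin l} (hx : x ∈ X) (n : ℕ) : birkSum l hf n x ≤ -(a * n) := by
  calc birkSum l hf n x ≤ ∑ _j ∈ Finset.range n, (-a) :=
        Finset.sum_le_sum fun j _ => hha _ (shift_iter_mem hXinv j hx)
    _ = -(a * n) := by simp [mul_comm]

lemma supExp_roof_le (hXinv : shiftMap l '' X = X) (hha : ∀ x ∈ X, hf x ≤ -a)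
    (I : List (Fin l)) : supExp l X hf I ≤ Real.exp (-(a * I.length)) := by
  refine Real.sSup_le ?_ (Real.exp_pos _).le
  rintro y ⟨x, hx, rfl⟩
  exact Real.exp_le_exp.2 (birkSum_le_of_le hXinv hha hx.2 I.length)

lemma supExp_take_le (hXinv : shiftMap l '' X = X) (hh0 : ∀ x ∈ X, hf x ≤ 0)
    (hMh : ∀ x ∈ X, |hf x| ≤ b) {K : List (Fin l)} {m : ℕ} (hm : m ≤ K.length) :
    supExp l X hf K ≤ supExp l X hf (K.take m) := by
  refine Real.sSup_le ?_ (supExp_nonneg _)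
  rintro y ⟨x, hx, rfl⟩
  have hsplit : birkSum l hf K.length x
      = birkSum l hf m x + birkSum l hf (K.length - m) ((shiftMap l)^[m] x) := by
    rw [← birkSum_add, show m + (K.length - m) = K.length by omega]
  have hneg : birkSum l hf (K.length - m) ((shiftMap l)^[m] x) ≤ 0 := by
    refine Finset.sum_nonpos fun j _ => ?_
    rw [← Function.iterate_add_apply]
    exact hh0 _ (shift_iter_mem hXinv _ hx.2)
  have h1 : Real.exp (birkSum l hf K.length x) ≤ Real.exp (birkSum l hf m x) := by
    rw [hsplit]
    exact Real.exp_le_exp.2 (by linarith)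
  refine le_trans h1 ?_
  have hxtake : x ∈ cylinder l (K.take m) ∩ X := by
    refine ⟨?_, hx.2⟩
    have hx1 : x ∈ cylinder l (K.take m ++ K.drop m) := by
      rw [List.take_append_drop]; exact hx.1
    exact (mem_cylinder_append.1 hx1).1
  have hlen : (K.take m).length = m := by simp [hm]
  calc Real.exp (birkSum l hf m x)
      = Real.exp (birkSum l hf (K.take m).length x) := by rw [hlen]
    _ ≤ supExp l X hf (K.take m) := le_supExp hXinv hMh hxtake

lemma dropLast_wordOf (x : ℤ → Fin l) (n : ℕ) :
    (wordOf x (n + 1)).dropLast = wordOf x n := by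
  rw [List.dropLast_eq_take]
  rw [length_wordOf]
  simp only [Nat.add_sub_cancel]
  exact take_wordOf x (by omega)

lemma exists_mem_wordsAt (hXinv : shiftMap l '' X = X) (hXne : X.Nonempty)
    (ha0 : 0 < a) (hha : ∀ x ∈ X, hf x ≤ -a) {r : ℝ} (hr0 : 0 < r) (hr1 : r ≤ 1)
    {x : ℤ → Fin l} (hx : x ∈ X) :
    ∃ n : ℕ, 1 ≤ n ∧ wordOf x n ∈ wordsAt l X hf r := by
  have hex : ∃ k : ℕ, supExp l X hf (wordOf x (k + 1)) < r := by
    obtain ⟨k, hk⟩ := exists_nat_gt ((-Real.log r) / a)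
    refine ⟨k, lt_of_le_of_lt (supExp_roof_le hXinv hha _) ?_⟩
    rw [length_wordOf]
    rw [← Real.exp_log hr0]
    refine Real.exp_lt_exp.2 ?_
    rw [div_lt_iff₀ ha0] at hk
    push_cast
    nlinarith [hk]
  classical
  set j := Nat.find hex with hj
  have hfind : supExp l X hf (wordOf x (j + 1)) < r := Nat.find_spec hex
  refine ⟨j + 1, by omega, wordOf_mem_words hx (by omega), hfind, ?_⟩
  rw [dropLast_wordOf]
  rcases Nat.eq_zero_or_pos j with hj0 | hjpos
  · rw [hj0]
    have : wordOf x 0 = ([] : List (Fin l)) := by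
      rw [wordOf]
      simp
    rw [this, supExp_nil hXne]
    exact hr1
  · have hj1 : j - 1 < j := by omega
    have hnot := Nat.find_min hex hj1
    rw [not_lt] at hnot
    rwa [show j - 1 + 1 = j by omega] at hnot

lemma wordsAt_cover (hXinv : shiftMap l '' X = X) (hXne : X.Nonempty)
    (ha0 : 0 < a) (hha : ∀ x ∈ X, hf x ≤ -a) {r : ℝ} (hr0 : 0 < r) (hr1 : r ≤ 1) :
    X ⊆ ⋃ I ∈ wordsAt l X hf r, cylinder l I := by
  intro x hx
  obtain ⟨n, hn, hmem⟩ := exists_mem_wordsAt hXinv hXne ha0 hha hr0 hr1 hx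
  exact Set.mem_biUnion hmem (mem_cylinder_wordOf x n)

lemma wordsAt_length_le (hXinv : shiftMap l '' X = X) (ha0 : 0 < a)
    (hha : ∀ x ∈ X, hf x ≤ -a) {r : ℝ} (hr0 : 0 < r)
    {I : List (Fin l)} (hI : I ∈ wordsAt l X hf r) :
    ((I.length : ℝ) - 1) * a ≤ -Real.log r := by
  obtain ⟨hw, _, hge⟩ := hI
  have hlen1 : 1 ≤ I.length := words_length_pos hw
  have h1 : r ≤ Real.exp (-(a * I.dropLast.length)) :=
    le_trans hge (supExp_roof_le hXinv hha _)
  have h2 : Real.log r ≤ -(a * I.dropLast.length) := by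
    rw [← Real.log_exp (-(a * I.dropLast.length))]
    exact Real.log_le_log hr0 h1
  have h3 : (I.dropLast.length : ℝ) = (I.length : ℝ) - 1 := by
    rw [List.length_dropLast]
    rw [Nat.cast_sub hlen1]
    simp
  rw [h3] at h2
  nlinarith [h2]

lemma wordsAt_length_gt (hXinv : shiftMap l '' X = X) (hb0 : 0 < b)
    (hhb : ∀ x ∈ X, -b ≤ hf x) (hMh : ∀ x ∈ X, |hf x| ≤ b) {r : ℝ} (hr0 : 0 < r)
    {I : List (Fin l)} (hI : I ∈ wordsAt l X hf r) :
    -Real.log r < b * I.length := by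
  obtain ⟨hw, hlt, _⟩ := hI
  have h1 : Real.exp (-(I.length * b)) ≤ supExp l X hf I :=
    exp_neg_le_supExp hXinv hMh hw.2
  have h2 : Real.exp (-(I.length * b)) < r := lt_of_le_of_lt h1 hlt
  have h3 : -((I.length : ℝ) * b) < Real.log r := by
    rw [← Real.log_exp (-((I.length:ℝ) * b))]
    exact Real.log_lt_log (Real.exp_pos _) h2
  nlinarith [h3]

end S3

namespace S3

variable {l : ℕ} {X : Set (ℤ → Fin l)} {φ hf : (ℤ → Fin l) → ℝ} {M a b : ℝ}

lemma wordsAt_length_nat_le (hXinv : shiftMap l '' X = X) (ha0 : 0 < a)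
    (hha : ∀ x ∈ X, hf x ≤ -a) {r : ℝ} (hr0 : 0 < r) (hr1 : r ≤ 1)
    {I : List (Fin l)} (hI : I ∈ wordsAt l X hf r) :
    I.length ≤ ⌊(-Real.log r) / a⌋₊ + 1 := by
  have hL0 : 0 ≤ -Real.log r := by
    have := Real.log_nonpos (le_of_lt hr0) hr1
    linarith
  have h1 := wordsAt_length_le hXinv ha0 hha hr0 hI
  have hlen1 : 1 ≤ I.length := words_length_pos hI.1
  have h2 : ((I.length - 1 : ℕ) : ℝ) ≤ (-Real.log r) / a := by
    rw [le_div_iff₀ ha0]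
    rw [Nat.cast_sub hlen1]
    push_cast
    nlinarith [h1]
  have h3 : I.length - 1 ≤ ⌊(-Real.log r) / a⌋₊ := Nat.le_floor h2
  omega

lemma wordsAt_finite (hXinv : shiftMap l '' X = X) (ha0 : 0 < a)
    (hha : ∀ x ∈ X, hf x ≤ -a) {r : ℝ} (hr0 : 0 < r) (hr1 : r ≤ 1) :
    (wordsAt l X hf r).Finite :=
  (List.finite_length_le (Fin l) (⌊(-Real.log r) / a⌋₊ + 1)).subset
    fun I hI => wordsAt_length_nat_le hXinv ha0 hha hr0 hr1 hI

lemma one_le_Gamma (hXinv : shiftMap l '' X = X) (hMφ : ∀ x ∈ X, |φ x| ≤ M)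
    (hXne : X.Nonempty) (hPstar0 : Pstar l X φ = 0)
    (ha0 : 0 < a) (hha : ∀ x ∈ X, hf x ≤ -a) {r : ℝ} (hr0 : 0 < r) (hr1 : r ≤ 1)
    (F : Finset (List (Fin l))) (hF : ∀ I, I ∈ F ↔ I ∈ wordsAt l X hf r) :
    1 ≤ ∑ I ∈ F, supExp l X φ I := by
  set G := ∑ I ∈ F, supExp l X φ I with hG
  -- membership facts
  have hFw : ∀ J ∈ F, J ∈ words l X := fun J hJ => ((hF J).1 hJ).1
  have hFcov : X ⊆ ⋃ J ∈ F, cylinder l J := by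
    intro x hx
    obtain ⟨n, hn, hmem⟩ := exists_mem_wordsAt hXinv hXne ha0 hha hr0 hr1 hx
    exact Set.mem_biUnion ((hF _).2 hmem) (mem_cylinder_wordOf x n)
  set Nb : ℕ := ⌊(-Real.log r) / a⌋₊ + 1 with hNb
  have hNb1 : 1 ≤ Nb := by omega
  have hFlen : ∀ J ∈ F, J.length ≤ Nb :=
    fun J hJ => wordsAt_length_nat_le hXinv ha0 hha hr0 hr1 ((hF J).1 hJ)
  -- G > 0
  have hGpos : 0 < G := by
    obtain ⟨x, hx⟩ := id hXne
    obtain ⟨n, hn, hmem⟩ := exists_mem_wordsAt hXinv hXne ha0 hha hr0 hr1 hx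
    calc (0:ℝ) < supExp l X φ (wordOf x n) :=
          supExp_pos hXinv hMφ ⟨x, mem_cylinder_wordOf x n, hx⟩
      _ ≤ G := Finset.single_le_sum (fun J _ => supExp_nonneg J) ((hF _).2 hmem)
  by_contra hcon
  push_neg at hcon
  have hlogG : Real.log G < 0 := Real.log_neg hGpos hcon
  set δ : ℝ := -Real.log G / Nb with hδ
  have hNbpos : (0:ℝ) < (Nb:ℝ) := by exact_mod_cast hNb1
  have hδpos : 0 < δ := div_pos (by linarith) hNbpos
  have hsum : ∑ J ∈ F, Real.exp (-(-δ) * (J.length : ℝ)) * supExp l X φ J ≤ 1 := by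
    have hterm : ∀ J ∈ F, Real.exp (-(-δ) * (J.length : ℝ)) * supExp l X φ J
        ≤ Real.exp (δ * Nb) * supExp l X φ J := by
      intro J hJ
      refine mul_le_mul_of_nonneg_right ?_ (supExp_nonneg J)
      refine Real.exp_le_exp.2 ?_
      rw [neg_neg]
      have : (J.length : ℝ) ≤ (Nb : ℝ) := by exact_mod_cast hFlen J hJ
      nlinarith [this]
    calc ∑ J ∈ F, Real.exp (-(-δ) * (J.length : ℝ)) * supExp l X φ J
        ≤ ∑ J ∈ F, Real.exp (δ * Nb) * supExp l X φ J := Finset.sum_le_sum hterm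
      _ = Real.exp (δ * Nb) * G := by rw [← Finset.mul_sum]
      _ = 1 := by
          rw [hδ, div_mul_cancel₀ _ (ne_of_gt hNbpos), Real.exp_neg, Real.exp_log hGpos]
          field_simp
  obtain ⟨D, hD, hb⟩ := key_exp_bound hXinv hMφ F hFw hFcov hNb1 hFlen (-δ) hsum
  have := Pstar_le_of_exp_bound hXinv hMφ hXne hD hb
  rw [hPstar0] at this
  linarith

lemma Gamma_le (hXinv : shiftMap l '' X = X) (hMφ : ∀ x ∈ X, |φ x| ≤ M)
    (ha0 : 0 < a) (hha : ∀ x ∈ X, hf x ≤ -a) {r δ : ℝ} (hr0 : 0 < r) (hr1 : r ≤ 1)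
    (hδ : 0 < δ) {n1 : ℕ}
    (hfek : ∀ n, n1 ≤ n → Lam l X φ n ≤ Real.exp (δ * n))
    (F : Finset (List (Fin l))) (hF : ∀ I, I ∈ F ↔ I ∈ wordsAt l X hf r)
    (hlong : ∀ I ∈ F, n1 ≤ I.length) :
    ∑ I ∈ F, supExp l X φ I
      ≤ (⌊(-Real.log r) / a⌋₊ + 1 : ℕ) * Real.exp (δ * (⌊(-Real.log r) / a⌋₊ + 1 : ℕ)) := by
  classical
  set Nb : ℕ := ⌊(-Real.log r) / a⌋₊ + 1 with hNb
  have hmapsto : ∀ I ∈ F, I.length ∈ Finset.Icc 1 Nb := by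
    intro I hI
    refine Finset.mem_Icc.2 ⟨words_length_pos ((hF I).1 hI).1, ?_⟩
    exact wordsAt_length_nat_le hXinv ha0 hha hr0 hr1 ((hF I).1 hI)
  have hfib : ∑ n ∈ Finset.Icc 1 Nb, ∑ I ∈ F.filter (fun I => I.length = n),
      supExp l X φ I = ∑ I ∈ F, supExp l X φ I :=
    Finset.sum_fiberwise_of_maps_to hmapsto _
  rw [← hfib]
  have hinner : ∀ n ∈ Finset.Icc 1 Nb,
      ∑ I ∈ F.filter (fun I => I.length = n), supExp l X φ I ≤ Real.exp (δ * Nb) := by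
    intro n hn
    rcases Finset.eq_empty_or_nonempty (F.filter (fun I => I.length = n)) with he | hne
    · rw [he, Finset.sum_empty]
      exact (Real.exp_pos _).le
    · obtain ⟨I0, hI0⟩ := hne
      rw [Finset.mem_filter] at hI0
      have hn1n : n1 ≤ n := by
        rw [← hI0.2]
        exact hlong I0 hI0.1
      have hsub : F.filter (fun I => I.length = n) ⊆ wordsLen l X n := by
        intro I hI
        rw [Finset.mem_filter] at hI
        exact mem_wordsLen.2 ⟨hI.2, ((hF I).1 hI.1).1⟩
      calc ∑ I ∈ F.filter (fun I => I.length = n), supExp l X φ I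
          ≤ ∑ I ∈ wordsLen l X n, supExp l X φ I :=
            Finset.sum_le_sum_of_subset_of_nonneg hsub fun I _ _ => supExp_nonneg I
        _ = Lam l X φ n := rfl
        _ ≤ Real.exp (δ * n) := hfek n hn1n
        _ ≤ Real.exp (δ * Nb) := by
            refine Real.exp_le_exp.2 ?_
            have h1 : (n:ℝ) ≤ (Nb:ℝ) := by exact_mod_cast (Finset.mem_Icc.1 hn).2
            nlinarith [h1]
  calc ∑ n ∈ Finset.Icc 1 Nb, ∑ I ∈ F.filter (fun I => I.length = n), supExp l X φ I
      ≤ ∑ _n ∈ Finset.Icc 1 Nb, Real.exp (δ * Nb) := Finset.sum_le_sum hinner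
    _ = (((Finset.Icc 1 Nb).card : ℕ) : ℝ) * Real.exp (δ * Nb) := by
        rw [Finset.sum_const, nsmul_eq_mul]
    _ ≤ (Nb : ℝ) * Real.exp (δ * Nb) := by
        refine mul_le_mul_of_nonneg_right ?_ (Real.exp_pos _).le
        rw [Nat.card_Icc]
        exact_mod_cast le_refl Nb

end S3

set_option maxHeartbeats 2000000 in
open Filter in
/-- If `t` is a root of `P_X(σ, g + t·h) = 0` then
`lim_{r→0⁺} (log Γ_r) / (log r) = 0`, where
`Γ_r = Σ_{I ∈ A_r} sup_{x ∈ [I]∩X} exp (S_{|I|} (g + t h)(x))`. -/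
theorem log_Gamma_div_log_r_tendsto_zero (l : ℕ) (hl : 1 ≤ l) (X : Set (ℤ → Fin l))
    (hXne : X.Nonempty) (hXcpt : IsCompact X) (hXinv : shiftMap l '' X = X)
    (g h : (ℤ → Fin l) → ℝ) (hg : ContinuousOn g X) (hh : ContinuousOn h X)
    (hneg : ∀ x ∈ X, h x < 0) (t : ℝ)
    (ht : press l X (fun x => g x + t * h x) X = 0) :
    Filter.Tendsto
      (fun r : ℝ => Real.log
          (∑' I : wordsAt l X h r, supExp l X (fun x => g x + t * h x) I.1) / Real.log r)
      (nhdsWithin 0 (Set.Ioi 0)) (nhds 0) := by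
  classical
  set φ : (ℤ → Fin l) → ℝ := fun x => g x + t * h x with hφdef
  have hφc : ContinuousOn φ X := hg.add (continuousOn_const.mul hh)
  obtain ⟨M, hM'⟩ := hXcpt.exists_bound_of_continuousOn hφc
  have hM : ∀ x ∈ X, |φ x| ≤ M := by
    intro x hx
    have := hM' x hx
    rwa [Real.norm_eq_abs] at this
  -- roof function bounds
  obtain ⟨za, hzaX, hza⟩ := hXcpt.exists_isMaxOn hXne hh
  set a : ℝ := -h za with hadef
  have ha0 : 0 < a := by
    have := hneg za hzaX
    rw [hadef]; linarith
  have hha : ∀ x ∈ X, h x ≤ -a := by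
    intro x hx
    have := hza hx
    rw [hadef]; simp only [neg_neg]; exact this
  obtain ⟨zb, hzbX, hzb⟩ := hXcpt.exists_isMinOn hXne hh
  set b : ℝ := -h zb with hbdef
  have hb0 : 0 < b := by
    have := hneg zb hzbX
    rw [hbdef]; linarith
  have hhb : ∀ x ∈ X, -b ≤ h x := by
    intro x hx
    have := hzb hx
    rw [hbdef]; simp only [neg_neg]; exact this
  have hMh : ∀ x ∈ X, |h x| ≤ b := by
    intro x hx
    rw [abs_of_neg (hneg x hx)]
    have := hhb x hx
    linarith
  -- pressure equals Fekete limit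
  have hPstar0 : S3.Pstar l X φ = 0 := by
    rw [← S3.press_eq_Pstar hXcpt hXinv hM hXne]
    exact ht
  -- main argument
  rw [Metric.tendsto_nhds]
  intro ε hε
  set δ : ℝ := ε * a / 8 with hδdef
  have hδpos : 0 < δ := by positivity
  obtain ⟨n1, hn11, hfek'⟩ := S3.fekete_upper hXinv hM hXne hδpos
  have hfek : ∀ n, n1 ≤ n → S3.Lam l X φ n ≤ Real.exp (δ * n) := by
    intro n hn
    have := hfek' n hn
    rwa [hPstar0, zero_add] at this
  -- eventual facts
  have hLtend : Tendsto (fun r : ℝ => -Real.log r) (nhdsWithin 0 (Set.Ioi 0)) atTop := by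
    have h1 : Tendsto Real.log (nhdsWithin 0 (Set.Ioi 0)) atBot :=
      Real.tendsto_log_nhdsGT_zero
    exact tendsto_neg_atBot_atTop.comp h1
  have hcomp : Tendsto (fun L : ℝ => L / a + 1) atTop atTop :=
    tendsto_atTop_add_const_right _ 1 (Filter.tendsto_id.atTop_div_const ha0)
  have hlogsmall : ∀ᶠ L : ℝ in atTop, Real.log (L / a + 1) ≤ ε / 8 * L := by
    have hc : (0:ℝ) < ε * a / 32 := by positivity
    have h1 := Real.isLittleO_log_id_atTop.def hc
    have h2 := hcomp.eventually h1
    filter_upwards [h2, eventually_ge_atTop (max a 1)] with L hL1 hL2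
    have hLa : a ≤ L := le_trans (le_max_left _ _) hL2
    have hL1' : (1:ℝ) ≤ L := le_trans (le_max_right _ _) hL2
    have hL0 : 0 < L := by linarith
    have hx0 : (0:ℝ) < L / a + 1 := by positivity
    have hb1 : Real.log (L / a + 1) ≤ ε * a / 32 * (L / a + 1) := by
      calc Real.log (L / a + 1) ≤ |Real.log (L / a + 1)| := le_abs_self _
        _ ≤ ε * a / 32 * |(L / a + 1)| := by
            have := hL1
            simpa [Real.norm_eq_abs] using this
        _ = ε * a / 32 * (L / a + 1) := by rw [abs_of_pos hx0]
    have hquot : L / a + 1 ≤ 2 * L / a := by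
      rw [div_add' _ _ _ (ne_of_gt ha0), div_le_div_iff₀ ha0 ha0]
      nlinarith [hLa]
    calc Real.log (L / a + 1) ≤ ε * a / 32 * (L / a + 1) := hb1
      _ ≤ ε * a / 32 * (2 * L / a) := by
          refine mul_le_mul_of_nonneg_left hquot (by positivity)
      _ = ε / 16 * L := by field_simp; ring
      _ ≤ ε / 8 * L := by nlinarith [hL0, hε]
  have evA : ∀ᶠ r : ℝ in nhdsWithin 0 (Set.Ioi 0),
      max (b * n1) (max a 1) ≤ -Real.log r := hLtend.eventually (eventually_ge_atTop _)
  have evB : ∀ᶠ r : ℝ in nhdsWithin 0 (Set.Ioi 0),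
      Real.log (-Real.log r / a + 1) ≤ ε / 8 * (-Real.log r) := hLtend.eventually hlogsmall
  have evC : ∀ᶠ r : ℝ in nhdsWithin 0 (Set.Ioi 0), r ∈ Set.Ioo (0:ℝ) 1 :=
    Filter.eventually_of_mem (Ioo_mem_nhdsGT_of_mem ⟨le_refl 0, one_pos⟩) (fun r hr => hr)
  filter_upwards [evA, evB, evC] with r hA hB hC
  obtain ⟨hr0, hr1⟩ := hC
  set L : ℝ := -Real.log r with hLdef
  have hlogr_neg : Real.log r < 0 := Real.log_neg hr0 hr1
  have hL0 : 0 < L := by rw [hLdef]; linarith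
  have hLa : a ≤ L := le_trans (le_trans (le_max_left _ _) (le_max_right _ _)) hA
  have hL1 : 1 ≤ L := le_trans (le_trans (le_max_right _ _) (le_max_right _ _)) hA
  have hLbn1 : b * n1 ≤ L := le_trans (le_max_left _ _) hA
  -- the finite set of words
  have hfin : (wordsAt l X h r).Finite :=
    S3.wordsAt_finite hXinv ha0 hha hr0 (le_of_lt hr1)
  set F : Finset (List (Fin l)) := hfin.toFinset with hFdef
  have hF : ∀ I, I ∈ F ↔ I ∈ wordsAt l X h r := fun I => Set.Finite.mem_toFinset hfin
  set G : ℝ := ∑ I ∈ F, supExp l X φ I with hGdef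
  -- identify the tsum
  have htsum : (∑' I : wordsAt l X h r, supExp l X φ I.1) = G := by
    rw [tsum_subtype]
    rw [tsum_eq_sum (s := F) (fun I hI => Set.indicator_of_notMem
      (fun hmem => hI ((hF I).2 hmem)) _)]
    exact Finset.sum_congr rfl fun I hI => Set.indicator_of_mem ((hF I).1 hI) _
  -- lower bound
  have hGge1 : 1 ≤ G :=
    S3.one_le_Gamma hXinv hM hXne hPstar0 ha0 hha hr0 (le_of_lt hr1) F hF
  have hlogG0 : 0 ≤ Real.log G := Real.log_nonneg hGge1
  -- long words
  have hlong : ∀ I ∈ F, n1 ≤ I.length := by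
    intro I hI
    have hgt := S3.wordsAt_length_gt hXinv hb0 hhb hMh hr0 ((hF I).1 hI)
    by_contra hcon
    push_neg at hcon
    have : (I.length : ℝ) ≤ (n1 : ℝ) := by exact_mod_cast le_of_lt hcon
    nlinarith [hgt, hLbn1, hb0]
  -- upper bound
  set Nb : ℕ := ⌊L / a⌋₊ + 1 with hNbdef
  have hGle : G ≤ (Nb : ℝ) * Real.exp (δ * Nb) := by
    have := S3.Gamma_le hXinv hM ha0 hha hr0 (le_of_lt hr1) hδpos hfek F hF hlong
    exact_mod_cast this
  have hNb1 : (1:ℝ) ≤ (Nb : ℝ) := by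
    have h9 : 1 ≤ Nb := Nat.le_add_left 1 _
    exact_mod_cast h9
  have hNble : (Nb : ℝ) ≤ L / a + 1 := by
    rw [hNbdef]
    push_cast
    have : (⌊L / a⌋₊ : ℝ) ≤ L / a := Nat.floor_le (by positivity)
    linarith
  have hlogG_le : Real.log G ≤ ε / 2 * L := by
    have h1 : Real.log G ≤ Real.log ((Nb:ℝ) * Real.exp (δ * Nb)) :=
      Real.log_le_log (by linarith) hGle
    have h2 : Real.log ((Nb:ℝ) * Real.exp (δ * Nb)) = Real.log (Nb:ℝ) + δ * Nb := by
      rw [Real.log_mul (by linarith) (Real.exp_ne_zero _), Real.log_exp]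
    have h3 : Real.log (Nb:ℝ) ≤ Real.log (L / a + 1) :=
      Real.log_le_log (by linarith) hNble
    have h4 : δ * Nb ≤ δ * (L / a + 1) := by
      refine mul_le_mul_of_nonneg_left hNble (le_of_lt hδpos)
    have h5 : δ * (L / a + 1) = ε / 8 * L + ε * a / 8 := by
      rw [hδdef]; field_simp
    have h6 : ε * a / 8 ≤ ε / 8 * L := by nlinarith [hLa, hε, ha0]
    have h7 : Real.log (L / a + 1) ≤ ε / 8 * L := hB
    have hεL : 0 ≤ ε * L := by positivity
    have h8 : Real.log (Nb:ℝ) ≤ ε / 8 * L := le_trans h3 h7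
    calc Real.log G ≤ Real.log (Nb:ℝ) + δ * Nb := by rw [← h2]; exact h1
      _ ≤ ε / 8 * L + (ε / 8 * L + ε * a / 8) := by linarith [h8, h4, h5]
      _ ≤ ε / 8 * L + (ε / 8 * L + ε / 8 * L) := by linarith [h6]
      _ ≤ ε / 2 * L := by linarith [hεL]
  -- conclude
  rw [htsum]
  rw [Real.dist_eq, sub_zero, abs_div]
  rw [abs_of_nonneg hlogG0]
  rw [abs_of_neg hlogr_neg]
  have hden : -Real.log r = L := rfl
  rw [hden]
  calc Real.log G / L ≤ ε / 2 * L / L := (div_le_div_iff_of_pos_right hL0).2 hlogG_le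
    _ = ε / 2 := by field_simp
    _ < ε := by linarith
end

section
/- Let (X,d) be a compact metric space, f : X → X continuous, and (φ_n)_{n≥1} a sequence of continuous functions φ_n : X → ℝ satisfying φ_{m+n} ≤ φ_n + φ_m∘f^n pointwise for all m, n ≥ 1. Then for every integer k ≥ 1 one has P(f^{2k}, φ_{2k}) ≤ 2·P(f^k, φ_k). -/
open scoped ENNReal

/-- `P_n(g, ψ, ε)` : the supremum, over all `(n,ε)`-separated subsets `E` of the space, of
`Σ_{x ∈ E} exp (Σ_{j=0}^{n-1} ψ (g^j x))` (computed in `ℝ≥0∞`).  Here `E` is `(n,ε)`-separated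
iff for all distinct `x, y ∈ E` one has `max_{0 ≤ j < n} dist (g^j x) (g^j y) > ε`. -/
noncomputable def sepSum {X : Type*} [MetricSpace X] (g : X → X) (ψ : X → ℝ)
    (ε : ℝ) (n : ℕ) : ℝ≥0∞ :=
  ⨆ (E : Finset X) (_ : ∀ x ∈ E, ∀ y ∈ E, x ≠ y →
      ∃ j < n, ε < dist (g^[j] x) (g^[j] y)),
    ∑ x ∈ E, ENNReal.ofReal (Real.exp (∑ j ∈ Finset.range n, ψ (g^[j] x)))

/-- The topological pressure `P(g, ψ) = lim_{ε→0} limsup_{n→∞} (1/n) log P_n(g, ψ, ε)`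
(the limit in `ε` is monotone, hence a supremum), with values in `EReal`. -/
noncomputable def topPress {X : Type*} [MetricSpace X] (g : X → X) (ψ : X → ℝ) : EReal :=
  ⨆ (ε : ℝ) (_ : 0 < ε),
    Filter.limsup
      (fun n : ℕ => (((1 : ℝ) / (n : ℝ)) : EReal) * ENNReal.log (sepSum g ψ ε n))
      Filter.atTop

private lemma e2 : ((2:ℝ):EReal) = (2:EReal) := by norm_cast
private lemma e2b : (2:EReal) ≠ ⊥ := by rw [← e2]; exact EReal.coe_ne_bot 2
private lemma e2t : (2:EReal) ≠ ⊤ := by rw [← e2]; exact EReal.coe_ne_top 2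
private lemma e2z : (2:EReal) ≠ 0 := by rw [← e2]; norm_cast

/-- Multiplication by `2` as an order isomorphism of `EReal`. -/
noncomputable def doubleIso : EReal ≃o EReal where
  toFun x := 2 * x
  invFun x := x / 2
  left_inv x := by
    show (2 * x) / 2 = x
    rw [← EReal.mul_div]
    exact EReal.mul_div_cancel e2b e2t e2z
  right_inv x := EReal.mul_div_cancel e2b e2t e2z
  map_rel_iff' := by
    intro a b
    show 2 * a ≤ 2 * b ↔ a ≤ b
    constructor
    · intro h
      have := EReal.div_le_div_right_of_nonneg (c := (2:EReal)) (by norm_num) h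
      rwa [← EReal.mul_div, ← EReal.mul_div,
        EReal.mul_div_cancel e2b e2t e2z, EReal.mul_div_cancel e2b e2t e2z] at this
    · intro h
      exact mul_le_mul_of_nonneg_left h (by norm_num)

private lemma pair_sum (a : ℕ → ℝ) (n : ℕ) :
    ∑ j ∈ Finset.range (2*n), a j = ∑ j ∈ Finset.range n, (a (2*j) + a (2*j+1)) := by
  induction n with
  | zero => simp
  | succ n ih =>
    have h2 : 2*(n+1) = (2*n + 1) + 1 := by ring
    rw [h2, Finset.sum_range_succ, Finset.sum_range_succ, ih, Finset.sum_range_succ]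
    ring

private lemma sepSum_double_le {X : Type*} [MetricSpace X]
    (f : X → X) (φ : ℕ → X → ℝ)
    (hsub : ∀ m n : ℕ, 1 ≤ m → 1 ≤ n → ∀ x : X, φ (m + n) x ≤ φ n x + φ m (f^[n] x))
    (k : ℕ) (hk : 1 ≤ k) (ε : ℝ) (n : ℕ) :
    sepSum (f^[2*k]) (φ (2*k)) ε n ≤ sepSum (f^[k]) (φ k) ε (2*n) := by
  have hit : ∀ (j : ℕ) (x : X), (f^[2*k])^[j] x = (f^[k])^[2*j] x := by
    intro j x
    rw [← Function.iterate_mul, ← Function.iterate_mul]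
    congr 1; ring
  have hit' : ∀ (j : ℕ) (x : X), (f^[k])^[2*j+1] x = f^[k] ((f^[2*k])^[j] x) := by
    intro j x
    rw [← Function.iterate_mul, ← Function.iterate_mul, ← Function.iterate_add_apply]
    congr 1; ring
  refine iSup₂_le fun E hE => ?_
  have hE' : ∀ x ∈ E, ∀ y ∈ E, x ≠ y →
      ∃ j < 2*n, ε < dist ((f^[k])^[j] x) ((f^[k])^[j] y) := by
    intro x hx y hy hxy
    obtain ⟨j, hj, hd⟩ := hE x hx y hy hxy
    exact ⟨2*j, by omega, by rwa [← hit j x, ← hit j y]⟩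
  have hsum : ∀ x : X,
      ∑ j ∈ Finset.range n, φ (2*k) ((f^[2*k])^[j] x)
        ≤ ∑ j ∈ Finset.range (2*n), φ k ((f^[k])^[j] x) := by
    intro x
    rw [pair_sum (fun j => φ k ((f^[k])^[j] x)) n]
    refine Finset.sum_le_sum fun j _ => ?_
    have h1 := hsub k k hk hk ((f^[2*k])^[j] x)
    have h2k : k + k = 2*k := by ring
    rw [h2k] at h1
    calc φ (2*k) ((f^[2*k])^[j] x)
        ≤ φ k ((f^[2*k])^[j] x) + φ k (f^[k] ((f^[2*k])^[j] x)) := h1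
      _ = φ k ((f^[k])^[2*j] x) + φ k ((f^[k])^[2*j+1] x) := by
          rw [hit j x, hit' j x, hit j x]
  calc ∑ x ∈ E, ENNReal.ofReal (Real.exp (∑ j ∈ Finset.range n, φ (2*k) ((f^[2*k])^[j] x)))
      ≤ ∑ x ∈ E, ENNReal.ofReal (Real.exp (∑ j ∈ Finset.range (2*n), φ k ((f^[k])^[j] x))) := by
        exact Finset.sum_le_sum fun x _ =>
          ENNReal.ofReal_le_ofReal (Real.exp_le_exp.2 (hsum x))
    _ ≤ sepSum (f^[k]) (φ k) ε (2*n) := by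
        refine le_iSup_of_le E ?_
        exact le_iSup (fun _ => ∑ x ∈ E, ENNReal.ofReal
          (Real.exp (∑ j ∈ Finset.range (2*n), φ k ((f^[k])^[j] x)))) hE'


/-- For a compact metric space `X`, a continuous `f : X → X` and a
sub-additive sequence `(φ_n)_{n≥1}` of continuous functions, for every `k ≥ 1` one has
`P(f^{2k}, φ_{2k}) ≤ 2 · P(f^k, φ_k)`. -/
theorem pressure_double_iterate_le {X : Type*} [MetricSpace X] [CompactSpace X]
    (f : X → X) (hf : Continuous f) (φ : ℕ → X → ℝ) (hφ : ∀ n, Continuous (φ n))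
    (hsub : ∀ m n : ℕ, 1 ≤ m → 1 ≤ n → ∀ x : X, φ (m + n) x ≤ φ n x + φ m (f^[n] x))
    (k : ℕ) (hk : 1 ≤ k) :
    topPress (f^[2 * k]) (φ (2 * k)) ≤ 2 * topPress (f^[k]) (φ k) := by
  refine iSup₂_le fun ε hε => ?_
  set v : ℕ → EReal := fun n =>
    (((1 : ℝ) / (n : ℝ)) : EReal) * ENNReal.log (sepSum (f^[k]) (φ k) ε n) with hv
  -- termwise bound
  have hterm : ∀ n : ℕ,
      (((1 : ℝ) / (n : ℝ)) : EReal) * ENNReal.log (sepSum (f^[2*k]) (φ (2*k)) ε n)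
        ≤ 2 * v (2*n) := by
    intro n
    have hlog : ENNReal.log (sepSum (f^[2*k]) (φ (2*k)) ε n)
        ≤ ENNReal.log (sepSum (f^[k]) (φ k) ε (2*n)) :=
      ENNReal.log_monotone (sepSum_double_le f φ hsub k hk ε n)
    have hreal : (1 : ℝ) / ((n:ℕ) : ℝ) = 2 * ((1 : ℝ) / ((2*n : ℕ) : ℝ)) := by
      push_cast
      rcases eq_or_ne ((n:ℕ):ℝ) 0 with h|h
      · simp [h]
      · field_simp
    have hcoef : (((1 : ℝ)) : EReal) / (((n:ℕ) : ℝ) : EReal)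
        = 2 * ((((1 : ℝ)) : EReal) / (((2*n : ℕ) : ℝ) : EReal)) := by
      rw [← EReal.coe_div, ← EReal.coe_div, hreal, EReal.coe_mul, e2]
    calc (((1 : ℝ) / (n : ℝ)) : EReal) * ENNReal.log (sepSum (f^[2*k]) (φ (2*k)) ε n)
        ≤ (((1 : ℝ) / (n : ℝ)) : EReal) * ENNReal.log (sepSum (f^[k]) (φ k) ε (2*n)) :=
          mul_le_mul_of_nonneg_left hlog (EReal.div_nonneg (by norm_num) (EReal.coe_nonneg.2 (by positivity)))
      _ = 2 * v (2*n) := by rw [hcoef, mul_assoc]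
  -- limsup chain
  have h1 : Filter.limsup
      (fun n : ℕ => (((1 : ℝ) / (n : ℝ)) : EReal)
        * ENNReal.log (sepSum (f^[2*k]) (φ (2*k)) ε n)) Filter.atTop
      ≤ Filter.limsup (fun n : ℕ => 2 * v (2*n)) Filter.atTop :=
    Filter.limsup_le_limsup (Filter.Eventually.of_forall hterm)
  have h2 : Filter.limsup (fun n : ℕ => 2 * v (2*n)) Filter.atTop
      = 2 * Filter.limsup (fun n : ℕ => v (2*n)) Filter.atTop :=
    (doubleIso.limsup_apply (u := fun n : ℕ => v (2*n))).symm
  have h3 : Filter.limsup (fun n : ℕ => v (2*n)) Filter.atTop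
      ≤ Filter.limsup v Filter.atTop := by
    have hmap : Filter.map (fun n : ℕ => 2*n) Filter.atTop ≤ Filter.atTop :=
      Filter.tendsto_atTop_mono (fun n => by simpa using (by omega : n ≤ 2*n)) Filter.tendsto_id
    calc Filter.limsup (fun n : ℕ => v (2*n)) Filter.atTop
        = Filter.limsup v (Filter.map (fun n : ℕ => 2*n) Filter.atTop) := rfl
      _ ≤ Filter.limsup v Filter.atTop := Filter.limsup_le_limsup_of_le hmap
  have h4 : Filter.limsup v Filter.atTop ≤ topPress (f^[k]) (φ k) := by
    exact le_iSup₂ (f := fun (ε : ℝ) (_ : 0 < ε) => Filter.limsup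
      (fun n : ℕ => (((1 : ℝ) / (n : ℝ)) : EReal)
        * ENNReal.log (sepSum (f^[k]) (φ k) ε n)) Filter.atTop) ε hε
  refine (h1.trans h2.le).trans ?_
  exact (mul_le_mul_of_nonneg_left h3 (by norm_num)).trans
    (mul_le_mul_of_nonneg_left h4 (by norm_num))
end
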